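/- arXiv:2104.11973 — 7 statements merged into one kernel-verified Lean document; each statement's English description precedes it below -/
import Mathlib

section
/- Let G = PAff_+(S¹). For every rotation T_α with α irrational and every g ∈ G which either is trivial on some set or is a rotation, there exist a finite subset 𝒢 ⊆ G and a constant C > 0 such that T_α ∈ 𝒢, g and all the elements T_α^n g T_α^{−n} lie in the subgroup generated by 𝒢, and ℓ_𝒢(T_α^n g T_α^{−n}) ≤ C log n for all n ≥ 2. -/
open Filter Set

noncomputable section

instance : Fact ((0:ℝ) < 1) := ⟨one_pos⟩

/-- The circle `ℝ/ℤ`. -/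
abbrev Circle1 : Type := AddCircle (1 : ℝ)

/-- The group of homeomorphisms of the circle, with `f * g = f ∘ g`. -/
instance : Group (Circle1 ≃ₜ Circle1) where
  mul f g := g.trans f
  one := Homeomorph.refl _
  inv := Homeomorph.symm
  mul_assoc f g h := Homeomorph.ext fun _ => rfl
  one_mul f := Homeomorph.ext fun _ => rfl
  mul_one f := Homeomorph.ext fun _ => rfl
  inv_mul_cancel f := Homeomorph.self_trans_symm f

@[simp] theorem circleHomeo_mul_apply (f g : Circle1 ≃ₜ Circle1) (x : Circle1) :
    (f * g) x = f (g x) := rfl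

/-- The rotation `T_α : x ↦ x + α` of the circle. -/
def rot (α : ℝ) : Circle1 ≃ₜ Circle1 := Homeomorph.addLeft ((α : Circle1))

/-- The word length of `g` with respect to a generating set `S`:
the least length of a word in elements of `S` and their inverses whose product is `g`. -/
def wordLength (S : Set (Circle1 ≃ₜ Circle1)) (g : Circle1 ≃ₜ Circle1) : ℕ :=
  sInf {n | ∃ w : List (Circle1 ≃ₜ Circle1),
    w.length = n ∧ (∀ x ∈ w, x ∈ S ∨ x⁻¹ ∈ S) ∧ w.prod = g}

/-- `f` is a smooth diffeomorphism of the circle: it admits a `C^∞` lift `F : ℝ → ℝ`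
with `F (x+1) = F x + 1` whose derivative never vanishes. -/
def IsSmoothDiffeo (f : Circle1 ≃ₜ Circle1) : Prop :=
  ∃ F : ℝ → ℝ, ContDiff ℝ (⊤ : ℕ∞) F ∧ (∀ x, F (x + 1) = F x + 1) ∧ (∀ x, deriv F x ≠ 0) ∧
    ∀ x : ℝ, f (x : Circle1) = ((F x : ℝ) : Circle1)

/-- `f` is an orientation-preserving piecewise-affine homeomorphism of the circle. -/
def IsPAff (f : Circle1 ≃ₜ Circle1) : Prop :=
  ∃ F : ℝ → ℝ, StrictMono F ∧ (∀ x, F (x + 1) = F x + 1) ∧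
    (∃ (n : ℕ) (t : Fin (n + 1) → ℝ), t 0 = 0 ∧ t (Fin.last n) = 1 ∧ StrictMono t ∧
      ∀ i : Fin n, ∃ a b : ℝ, ∀ x ∈ Icc (t i.castSucc) (t i.succ), F x = a * x + b) ∧
    ∀ x : ℝ, f (x : Circle1) = ((F x : ℝ) : Circle1)

/-- `f` is trivial on some (nonempty open) set. -/
def TrivialOnSomeSet (f : Circle1 ≃ₜ Circle1) : Prop :=
  ∃ I : Set Circle1, IsOpen I ∧ I.Nonempty ∧ ∀ x ∈ I, f x = x

/-- `f` is a rotation. -/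
def IsRotation (f : Circle1 ≃ₜ Circle1) : Prop := ∃ α : ℝ, f = rot α

/-- The representative in `[0,1)` of a point of the circle. -/
def rep (z : Circle1) : ℝ := (AddCircle.equivIco 1 0 z : ℝ)

namespace S3Aux

abbrev H := Circle1 ≃ₜ Circle1

lemma inv_apply (f : H) (z : Circle1) : (f⁻¹ : H) z = f.symm z := rfl

lemma apply_inv (f : H) (z : Circle1) : f ((f⁻¹ : H) z) = z := f.apply_symm_apply z

lemma inv_apply_self (f : H) (z : Circle1) : (f⁻¹ : H) (f z) = z := f.symm_apply_apply z

lemma coe_int (x : ℝ) (n : ℤ) : ((x + n : ℝ) : Circle1) = (x : Circle1) := by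
  have h : ((x + n : ℝ) : Circle1) - (x:Circle1) = ((n:ℝ) : Circle1) := by
    rw [← AddCircle.coe_sub]; ring_nf
  have h2 : ((x + n : ℝ) : Circle1) - (x : Circle1) = 0 := by
    rw [h]; exact (AddCircle.coe_eq_zero_iff _).mpr ⟨n, by simp⟩
  have := sub_eq_zero.mp h2
  exact this

lemma coe_congr {a b : ℝ} (n : ℤ) (h : a = b + n) : (a : Circle1) = (b : Circle1) := by
  rw [h, coe_int]

lemma rot_apply (β x : ℝ) : rot β (x : Circle1) = ((β + x : ℝ) : Circle1) := by
  show ((β:ℝ) : Circle1) + (x : Circle1) = _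
  rw [← AddCircle.coe_add]

lemma rot_apply' (β : ℝ) (z : Circle1) : rot β z = ((β:ℝ):Circle1) + z := rfl

lemma rot_inv_apply (β : ℝ) (z : Circle1) : (rot β)⁻¹ z = ((-β : ℝ) : Circle1) + z := by
  apply (rot β).injective
  rw [apply_inv, rot_apply', ← add_assoc, ← AddCircle.coe_add]
  norm_num

lemma rot_inv_apply' (β x : ℝ) : (rot β)⁻¹ (x : Circle1) = ((x - β : ℝ) : Circle1) := by
  rw [rot_inv_apply, ← AddCircle.coe_add]; ring_nf

lemma rot_pow_apply (β : ℝ) (n : ℕ) (z : Circle1) :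
    (rot β ^ n) z = ((n * β : ℝ) : Circle1) + z := by
  induction n generalizing z with
  | zero => simp
  | succ k ih =>
    rw [pow_succ, circleHomeo_mul_apply, rot_apply', ih, ← add_assoc, ← AddCircle.coe_add]
    push_cast; ring_nf

lemma exists_rep_half (z : Circle1) : ∃ x : ℝ, |x| ≤ 1/2 ∧ z = (x : Circle1) := by
  set y := (AddCircle.equivIco 1 0 z : ℝ) with hy
  have hmem : y ∈ Ico (0:ℝ) 1 := by
    have := (AddCircle.equivIco 1 0 z).2
    simpa using this
  have hz : (y : Circle1) = z := by
    have := (AddCircle.equivIco 1 0).symm_apply_apply z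
    exact this
  by_cases hle : y ≤ 1/2
  · exact ⟨y, by rw [abs_le]; constructor <;> linarith [hmem.1, hmem.2], hz.symm⟩
  · refine ⟨y - 1, ?_, ?_⟩
    · rw [abs_le]; constructor <;> linarith [hmem.1, hmem.2]
    · rw [show y - 1 = y + (-1 : ℤ) by push_cast; ring, coe_int, hz]

lemma wordLength_le (S : Set H) (g : H) (w : List H)
    (hw : ∀ x ∈ w, x ∈ S ∨ x⁻¹ ∈ S) (hp : w.prod = g) : wordLength S g ≤ w.length :=
  Nat.sInf_le ⟨w, rfl, hw, hp⟩

lemma prod_mem_closure (S : Set H) (w : List H) (hw : ∀ x ∈ w, x ∈ S ∨ x⁻¹ ∈ S) :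
    w.prod ∈ Subgroup.closure S := by
  induction w with
  | nil => simpa using one_mem _
  | cons a l ih =>
    rw [List.prod_cons]
    refine mul_mem ?_ (ih fun x hx => hw x (List.mem_cons_of_mem a hx))
    rcases hw a List.mem_cons_self with h | h
    · exact Subgroup.subset_closure h
    · simpa using inv_mem (Subgroup.subset_closure h)

/-- conjugation lemma -/
lemma conj_eq_conj (f₁ f₂ h : H) (K : Set Circle1)
    (hK : ∀ z ∉ K, h z = z) (heq : ∀ z ∈ K, f₁ z = f₂ z) :
    f₁ * h * f₁⁻¹ = f₂ * h * f₂⁻¹ := by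
  have hKK : ∀ z ∈ K, h z ∈ K := by
    intro z hz
    by_contra hzn
    have h1 : h (h z) = h z := hK _ hzn
    have := h.injective h1
    rw [this] at hzn
    exact hzn hz
  apply Homeomorph.ext
  intro y
  simp only [circleHomeo_mul_apply]
  by_cases h1 : (f₁⁻¹ : H) y ∈ K
  · have hy : f₂ ((f₁⁻¹:H) y) = y := by rw [← heq _ h1, apply_inv]
    have h2 : (f₂⁻¹ : H) y = (f₁⁻¹ : H) y := by
      apply f₂.injective
      rw [apply_inv]
      exact hy.symm ▸ rfl
    rw [h2, heq _ (hKK _ h1)]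
  · have h2 : (f₂⁻¹ : H) y ∉ K := by
      intro hc
      have : f₁ ((f₂⁻¹:H) y) = y := by rw [heq _ hc, apply_inv]
      have := f₁.injective (a₁ := (f₂⁻¹:H) y) (a₂ := (f₁⁻¹:H) y) (by rw [this, apply_inv])
      rw [this] at hc
      exact h1 hc
    rw [hK _ h1, hK _ h2, apply_inv, apply_inv]

end S3Aux
namespace S3Aux

section Machine

variable (F : ℝ ≃o ℝ)

lemma equivariant_int (hF : ∀ x, F (x + 1) = F x + 1) (x : ℝ) (n : ℤ) : F (x + n) = F x + n := by
  induction n using Int.induction_on with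
  | zero => simp
  | succ k ih =>
    have := hF (x + k)
    push_cast at ih ⊢
    rw [show x + ((k:ℝ) + 1) = (x + k) + 1 by ring, hF, ih]; ring
  | pred k ih =>
    have h2 := hF (x + (-(k:ℝ) - 1))
    push_cast at ih ⊢
    rw [show x + (-(k:ℝ) - 1) + 1 = x + -(k:ℝ) by ring] at h2
    rw [show F (x + (-(k:ℝ) - 1)) = F (x + -(k:ℝ)) - 1 by rw [h2]; ring ]
    rw [ih]; ring

lemma equivariant_symm (hF : ∀ x, F (x + 1) = F x + 1) (y : ℝ) : F.symm (y + 1) = F.symm y + 1 := by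
  apply F.injective
  rw [F.apply_symm_apply, hF, F.apply_symm_apply]

private def circMap (hF : ∀ x, F (x + 1) = F x + 1) : Circle1 → Circle1 :=
  Quotient.map' F (by
    intro a b hab
    rw [QuotientAddGroup.leftRel_apply] at hab ⊢
    obtain ⟨n, hn⟩ := hab
    refine ⟨n, ?_⟩
    have hn' : (n:ℝ) = -a + b := by simpa using hn
    have hb : b = a + (n : ℝ) := by linarith
    rw [hb, equivariant_int F hF a n]
    simp)

lemma circMap_mk (hF : ∀ x, F (x + 1) = F x + 1) (x : ℝ) : circMap F hF (x : Circle1) = ((F x : ℝ) : Circle1) := rfl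

lemma circMap_continuous (hF : ∀ x, F (x + 1) = F x + 1) : Continuous (circMap F hF) := by
  have hq : Topology.IsQuotientMap ((↑·) : ℝ → Circle1) := isQuotientMap_quotient_mk'
  rw [hq.continuous_iff]
  have : (circMap F hF) ∘ ((↑·) : ℝ → Circle1) = fun x => ((F x : ℝ) : Circle1) := by
    funext x; exact circMap_mk F hF x
  rw [this]
  exact Continuous.comp continuous_quotient_mk' (F.toHomeomorph).continuous

/-- The circle homeomorphism induced by an equivariant order isomorphism of ℝ. -/
def mkHomeo (hF : ∀ x, F (x + 1) = F x + 1) : H where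
  toFun := circMap F hF
  invFun := circMap F.symm (equivariant_symm F hF)
  left_inv := by
    intro z
    obtain ⟨x, rfl⟩ := QuotientAddGroup.mk_surjective z
    rw [circMap_mk, circMap_mk]
    simp
  right_inv := by
    intro z
    obtain ⟨x, rfl⟩ := QuotientAddGroup.mk_surjective z
    rw [circMap_mk, circMap_mk]
    simp
  continuous_toFun := circMap_continuous F hF
  continuous_invFun := circMap_continuous F.symm (equivariant_symm F hF)

lemma mkHomeo_apply (hF : ∀ x, F (x + 1) = F x + 1) (x : ℝ) : mkHomeo F hF (x : Circle1) = ((F x : ℝ) : Circle1) := rfl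

end Machine

lemma strictMono_pair {a b c d : ℝ} (hab : a < b) (hbc : b < c) (hcd : c < d) :
    StrictMono ![a, b, c, d] := by
  rw [Fin.strictMono_iff_lt_succ]
  intro i
  fin_cases i <;> simpa using by first | exact hab | exact hbc | exact hcd

lemma isPAff_rot (β : ℝ) : IsPAff (rot β) := by
  refine ⟨fun x => x + β, fun x y h => by simpa using h, fun x => by ring, ?_, ?_⟩
  · refine ⟨1, ![0, 1], rfl, rfl, ?_, ?_⟩
    · rw [Fin.strictMono_iff_lt_succ]
      intro i
      fin_cases i
      simp
    · intro i
      exact ⟨1, β, fun x _ => by ring⟩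
  · intro x
    rw [rot_apply]
    norm_num [add_comm]

end S3Aux
namespace S3Aux

section Doubler

variable (M : ℕ)

def rr : ℝ := 1/4 - 1/(2*M)

def lam : ℝ := (1 - 4*(rr M))/(1 - 2*(rr M))

variable (hM : 5 ≤ M)
include hM

lemma hMR : (5:ℝ) ≤ (M:ℝ) := by exact_mod_cast hM
lemma hMpos : (0:ℝ) < (M:ℝ) := lt_of_lt_of_le (by norm_num) (hMR M hM)
lemma rr_pos : 0 < rr M := by
  have h := hMR M hM
  have : 1/(2*(M:ℝ)) ≤ 1/10 := by
    apply div_le_div_of_nonneg_left <;> nlinarith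
  unfold rr; linarith
lemma rr_lt : rr M < 1/4 := by
  have h := hMpos M hM
  have : 0 < 1/(2*(M:ℝ)) := by positivity
  unfold rr; linarith
lemma one_sub_4rr : 1 - 4 * rr M = 2/M := by
  have h := hMpos M hM
  unfold rr; field_simp; ring
lemma one_sub_2rr : 1 - 2 * rr M = 1/2 + 1/M := by
  have h := hMpos M hM
  unfold rr; field_simp; ring
lemma lam_pos : 0 < lam M := by
  have h := hMpos M hM
  unfold lam
  rw [one_sub_4rr M hM, one_sub_2rr M hM]
  positivity
lemma lam_lt_two : lam M < 2 := by
  have h := hMpos M hM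
  unfold lam
  rw [one_sub_4rr M hM, one_sub_2rr M hM]
  rw [div_lt_iff₀ (by positivity)]
  have h2 : (2:ℝ)*(1/2 + 1/(M:ℝ)) = 1 + 2*(1/(M:ℝ)) := by ring
  have h3 : (2:ℝ)/(M:ℝ) = 2*(1/(M:ℝ)) := by ring
  have h4 : 0 < 1/(M:ℝ) := by positivity
  linarith
lemma lam_key : lam M * (1 - 2*rr M) = 1 - 4*rr M := by
  have h2 := one_sub_2rr M hM
  have h := hMpos M hM
  have hne : 1 - 2*rr M ≠ 0 := by rw [h2]; positivity
  unfold lam; exact div_mul_cancel₀ _ hne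

/-- the basic PL piece -/
def GG (v : ℝ) : ℝ := min (2*v) (lam M * v + (2 - lam M) * rr M)

lemma GG_mono : StrictMono (GG M) := by
  intro a b h
  have h1 : (2:ℝ)*a < 2*b := by linarith
  have h2 : lam M * a + (2 - lam M) * rr M < lam M * b + (2 - lam M) * rr M := by
    have := lam_pos M hM
    nlinarith
  exact lt_min ((min_le_left _ _).trans_lt h1) ((min_le_right _ _).trans_lt h2)

lemma GG_left {v : ℝ} (hv : v ≤ rr M) : GG M v = 2*v := by
  apply min_eq_left
  have h1 := lam_lt_two M hM
  nlinarith [mul_nonneg (by linarith : (0:ℝ) ≤ 2 - lam M) (by linarith : (0:ℝ) ≤ rr M - v)]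
lemma GG_right {v : ℝ} (hv : rr M ≤ v) : GG M v = lam M * v + (2 - lam M) * rr M := by
  apply min_eq_right
  have h1 := lam_lt_two M hM
  nlinarith [mul_nonneg (by linarith : (0:ℝ) ≤ 2 - lam M) (by linarith : (0:ℝ) ≤ v - rr M)]
lemma GG_top : GG M (1 - rr M) = 1 - 2 * rr M := by
  rw [GG_right M hM (by have := rr_lt M hM; linarith)]
  have := lam_key M hM
  nlinarith
lemma GG_bot : GG M (-rr M) = -2 * rr M := by
  rw [GG_left M hM (by have := rr_pos M hM; linarith)]; ring

/-- the lift of the doubling map -/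
def FD (u : ℝ) : ℝ := (⌊u + rr M⌋ : ℝ) + GG M (u - ⌊u + rr M⌋)

omit hM in
lemma FD_equiv (u : ℝ) : FD M (u + 1) = FD M u + 1 := by
  unfold FD
  have h : ⌊u + 1 + rr M⌋ = ⌊u + rr M⌋ + 1 := by
    rw [show u + 1 + rr M = (u + rr M) + (1:ℤ) by push_cast; ring, Int.floor_add_intCast]
  rw [h]
  push_cast
  ring_nf

omit hM in
lemma floor_bounds (u : ℝ) : -rr M ≤ u - ⌊u + rr M⌋ ∧ u - ⌊u + rr M⌋ < 1 - rr M := by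
  have h1 := Int.floor_le (u + rr M)
  have h2 := Int.lt_floor_add_one (u + rr M)
  constructor <;> linarith

lemma FD_mono : StrictMono (FD M) := by
  intro u u' h
  have hf : ⌊u + rr M⌋ ≤ ⌊u' + rr M⌋ := Int.floor_le_floor (by linarith)
  rcases eq_or_lt_of_le hf with heq | hlt
  · unfold FD
    rw [← heq]
    have : u - ⌊u + rr M⌋ < u' - ⌊u + rr M⌋ := by linarith
    have := GG_mono M hM this
    linarith
  · unfold FD
    have b1 := floor_bounds M u
    have b2 := floor_bounds M u'
    have g1 : GG M (u - ⌊u + rr M⌋) < GG M (1 - rr M) := GG_mono M hM b1.2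
    have g2 : GG M (-rr M) ≤ GG M (u' - ⌊u' + rr M⌋) := (GG_mono M hM).monotone b2.1
    rw [GG_top M hM] at g1
    rw [GG_bot M hM] at g2
    have : (⌊u + rr M⌋ : ℝ) + 1 ≤ (⌊u' + rr M⌋ : ℝ) := by exact_mod_cast hlt
    linarith

lemma FD_surj : Function.Surjective (FD M) := by
  intro y
  set m := ⌊y + 2 * rr M⌋ with hm
  have h1 := Int.floor_le (y + 2 * rr M)
  have h2 := Int.lt_floor_add_one (y + 2 * rr M)
  set w := y - m with hw
  have hw1 : -2 * rr M ≤ w := by rw [hw]; push_cast at h1 ⊢; linarith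
  have hw2 : w < 1 - 2 * rr M := by rw [hw]; push_cast at h2 ⊢; linarith
  have hrp := rr_pos M hM
  have hrl := rr_lt M hM
  have hlp := lam_pos M hM
  have hlk := lam_key M hM
  by_cases hcase : w ≤ 2 * rr M
  · refine ⟨(m:ℝ) + w/2, ?_⟩
    have hfl : ⌊(m:ℝ) + w/2 + rr M⌋ = m := by
      rw [show (m:ℝ) + w/2 + rr M = (w/2 + rr M) + m by ring, Int.floor_add_intCast]
      have : ⌊w/2 + rr M⌋ = 0 := by
        rw [Int.floor_eq_iff]
        push_cast
        constructor <;> linarith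
      omega
    unfold FD
    rw [hfl, show (m:ℝ) + w/2 - m = w/2 by ring, GG_left M hM (by linarith)]
    rw [hw]; ring
  · push_neg at hcase
    refine ⟨(m:ℝ) + rr M + (w - 2*rr M)/lam M, ?_⟩
    have hv1 : rr M < rr M + (w - 2*rr M)/lam M := by
      have : 0 < (w - 2*rr M)/lam M := div_pos (by linarith) hlp
      linarith
    have hv2 : rr M + (w - 2*rr M)/lam M < 1 - rr M := by
      have : (w - 2*rr M)/lam M < 1 - 2*rr M := by
        rw [div_lt_iff₀ hlp]
        nlinarith
      linarith
    have hfl : ⌊(m:ℝ) + rr M + (w - 2*rr M)/lam M + rr M⌋ = m := by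
      rw [show (m:ℝ) + rr M + (w - 2*rr M)/lam M + rr M
           = (rr M + (w - 2*rr M)/lam M + rr M) + m by ring, Int.floor_add_intCast]
      have : ⌊rr M + (w - 2*rr M)/lam M + rr M⌋ = 0 := by
        rw [Int.floor_eq_iff]
        push_cast
        constructor <;> linarith
      omega
    unfold FD
    rw [hfl, show (m:ℝ) + rr M + (w - 2*rr M)/lam M - m = rr M + (w - 2*rr M)/lam M by ring,
       GG_right M hM (by linarith)]
    have hlam_ne : lam M ≠ 0 := ne_of_gt hlp
    rw [hw]
    field_simp
    ring
  
lemma FD_eval {u : ℝ} (hu : |u| ≤ rr M) : FD M u = 2 * u := by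
  rw [abs_le] at hu
  have hrp := rr_pos M hM
  have hrl := rr_lt M hM
  have hfl : ⌊u + rr M⌋ = 0 := by
    rw [Int.floor_eq_iff]
    push_cast
    constructor <;> linarith
  unfold FD
  rw [hfl]
  push_cast
  rw [show u - 0 = u by ring, GG_left M hM (by linarith)]
  ring

end Doubler

end S3Aux
namespace S3Aux

section Doubler2

variable (M : ℕ) (hM : 5 ≤ M)

def FDiso : ℝ ≃o ℝ :=
  StrictMono.orderIsoOfSurjective (FD M) (FD_mono M hM) (FD_surj M hM)

lemma FDiso_coe (x : ℝ) : FDiso M hM x = FD M x := rfl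

def Dmap : H := mkHomeo (FDiso M hM) (fun x => FD_equiv M x)

lemma Dmap_apply (x : ℝ) : Dmap M hM (x : Circle1) = ((FD M x : ℝ) : Circle1) := rfl

lemma Dmap_eval {u : ℝ} (hu : |u| ≤ rr M) :
    Dmap M hM (u : Circle1) = ((2 * u : ℝ) : Circle1) := by
  rw [Dmap_apply, FD_eval M hM hu]

lemma Dmap_inv_eval {x : ℝ} (hx : |x / 2| ≤ rr M) :
    (Dmap M hM)⁻¹ (x : Circle1) = ((x / 2 : ℝ) : Circle1) := by
  have h : Dmap M hM ((x/2 : ℝ) : Circle1) = (x : Circle1) := by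
    rw [Dmap_eval M hM hx]
    congr 1
    ring
  rw [← h, inv_apply_self]

lemma isPAff_Dmap : IsPAff (Dmap M hM) := by
  have hrp := rr_pos M hM
  have hrl := rr_lt M hM
  refine ⟨FD M, FD_mono M hM, FD_equiv M, ?_, fun x => rfl⟩
  refine ⟨3, ![0, rr M, 1 - rr M, 1], rfl, ?_, ?_, ?_⟩
  · rfl
  · exact strictMono_pair (by linarith) (by linarith) (by linarith)
  · intro i
    fin_cases i
    · refine ⟨2, 0, fun x hx => ?_⟩
      simp only [Fin.castSucc, Fin.succ] at hx ⊢
      have hx' : x ∈ Icc (0:ℝ) (rr M) := hx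
      rw [FD_eval M hM (abs_le.mpr ⟨by linarith [hx'.1], hx'.2⟩)]
      ring
    · refine ⟨lam M, (2 - lam M) * rr M, fun x hx => ?_⟩
      have hx' : x ∈ Icc (rr M) (1 - rr M) := hx
      rcases lt_or_eq_of_le hx'.2 with hlt | heq
      · have hfl : ⌊x + rr M⌋ = 0 := by
          rw [Int.floor_eq_iff]
          push_cast
          constructor <;> linarith [hx'.1]
        unfold FD
        rw [hfl]
        push_cast
        rw [show x - 0 = x by ring, GG_right M hM hx'.1]
        ring
      · have hfl : ⌊x + rr M⌋ = 1 := by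
          rw [Int.floor_eq_iff]
          push_cast
          constructor <;> [linarith [heq]; linarith [heq]]
        unfold FD
        rw [hfl]
        push_cast
        rw [heq, show (1:ℝ) - rr M - 1 = -rr M by ring, GG_bot M hM]
        have hlk := lam_key M hM
        nlinarith
    · refine ⟨2, -1, fun x hx => ?_⟩
      have hx' : x ∈ Icc (1 - rr M) 1 := hx
      have : FD M x = FD M (x - 1) + 1 := by
        rw [show x = (x - 1) + 1 by ring, FD_equiv]
        ring_nf
      rw [this, FD_eval M hM (abs_le.mpr ⟨by linarith [hx'.1], by linarith [hx'.2]⟩)]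
      ring

end Doubler2

end S3Aux
namespace S3Aux

section Good

variable (α : ℝ) (M : ℕ) (hM : 5 ≤ M)

def bb : ℝ := 1/2 - 2/M

lemma bb_pos (hM : 5 ≤ M) : 0 < bb M := by
  have h := hMR M hM
  have h2 : 2/(M:ℝ) ≤ 2/5 := by
    apply div_le_div_of_nonneg_left <;> linarith
  unfold bb; linarith

lemma bb_half_le_rr (hM : 5 ≤ M) : bb M / 2 ≤ rr M := by
  have h := hMpos M hM
  have h2 : 1/(2*(M:ℝ)) ≤ 1/(M:ℝ) := by
    apply div_le_div_of_nonneg_left <;> linarith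
  unfold bb rr
  rw [show (1/2 - 2/(M:ℝ))/2 = 1/4 - 1/M by ring]
  linarith

lemma bb_lt_half (hM : 5 ≤ M) : bb M < 1/2 := by
  have h := hMpos M hM
  have : 0 < 2/(M:ℝ) := by positivity
  unfold bb; linarith

lemma good_double (m : ℕ) (f : H)
    (hf : ∀ x : ℝ, |x| ≤ bb M → f (x : Circle1) = ((x + m*α : ℝ) : Circle1)) :
    ∃ (k₁ k₂ : ℕ), k₁ < 2*M ∧ k₂ < 2*M ∧ ∀ x : ℝ, |x| ≤ bb M →
      (rot (k₁/M) * Dmap M hM * (rot (k₂/M))⁻¹ * f * (Dmap M hM)⁻¹) (x : Circle1)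
        = ((x + (2*m)*α : ℝ) : Circle1) := by
  have hMp := hMpos M hM
  have hbp := bb_pos M hM
  have hbr := bb_half_le_rr M hM
  set q : ℤ := round ((M:ℝ) * (m * α)) with hq
  have hqe : |(M:ℝ) * (m*α) - q| ≤ 1/2 := abs_sub_round _
  set N : ℤ := q / M with hN
  set j : ℕ := (q % M).toNat with hj
  have hMz : (M:ℤ) ≠ 0 := by positivity
  have hjnn : 0 ≤ q % (M:ℤ) := Int.emod_nonneg q hMz
  have hjlt : q % (M:ℤ) < M := Int.emod_lt_of_pos q (by positivity)
  have hjM : j < M := by omega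
  have hqd : q = M * N + j := by
    rw [hN, hj, Int.toNat_of_nonneg hjnn]
    exact (Int.mul_ediv_add_emod q M).symm
  have hqr : (q:ℝ) = (M:ℝ)*(N:ℝ) + (j:ℝ) := by
    have : ((q:ℤ):ℝ) = (((M:ℤ) * N + (j:ℤ) : ℤ) : ℝ) := by exact_mod_cast congrArg (fun z : ℤ => (z:ℝ)) hqd
    push_cast at this
    linarith
  have hcenter : |(m:ℝ)*α - ((N:ℝ) + j/M)| ≤ 1/(2*M) := by
    have hNj : (N:ℝ) + (j:ℝ)/M = (q:ℝ)/M := by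
      rw [hqr]
      field_simp
    rw [hNj, show (m:ℝ)*α - (q:ℝ)/M = ((M:ℝ)*(m*α) - q)/M by field_simp,
      abs_div, abs_of_pos hMp, show (1:ℝ)/(2*M) = (1/2)/M by ring]
    gcongr
  refine ⟨2*j, j, by omega, by omega, ?_⟩
  intro x hx
  simp only [circleHomeo_mul_apply]
  have hx2 : |x/2| ≤ rr M := by
    rw [abs_div, abs_two]
    have : |x|/2 ≤ bb M / 2 := by linarith
    linarith
  rw [Dmap_inv_eval M hM hx2]
  rw [hf (x/2) (by rw [abs_div, abs_two]; linarith [abs_nonneg x])]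
  rw [rot_inv_apply']
  set u : ℝ := x/2 + m*α - j/M - N with hu
  have e4 : ((x/2 + m*α - j/M : ℝ) : Circle1) = ((u : ℝ) : Circle1) :=
    coe_congr N (by rw [hu]; push_cast; ring)
  rw [e4]
  have hur : |u| ≤ rr M := by
    have h1 : u = x/2 + ((m:ℝ)*α - ((N:ℝ) + j/M)) := by rw [hu]; ring
    have h2 : |u| ≤ |x/2| + |(m:ℝ)*α - ((N:ℝ) + j/M)| := by
      rw [h1]; exact abs_add_le _ _
    have h3 : |x/2| ≤ bb M / 2 := by rw [abs_div, abs_two]; linarith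
    have h4 : bb M / 2 + 1/(2*M) = rr M := by
      unfold bb rr; field_simp; ring
    linarith
  rw [Dmap_eval M hM hur]
  rw [rot_apply]
  apply coe_congr (-2*N)
  rw [hu]
  push_cast
  field_simp
  ring

lemma good_succ (m : ℕ) (f : H)
    (hf : ∀ x : ℝ, |x| ≤ bb M → f (x : Circle1) = ((x + m*α : ℝ) : Circle1)) :
    ∀ x : ℝ, |x| ≤ bb M → (rot α * f) (x : Circle1) = ((x + (m+1)*α : ℝ) : Circle1) := by
  intro x hx
  rw [circleHomeo_mul_apply, hf x hx, rot_apply]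
  apply coe_congr 0
  push_cast
  ring

lemma log2_rec {n : ℕ} (hn : 2 ≤ n) : Nat.log2 n = Nat.log2 (n/2) + 1 := by
  conv_lhs => rw [Nat.log2_def]
  rw [if_pos hn]

lemma exists_good (S : Set H) (hTS : rot α ∈ S) (hDS : Dmap M hM ∈ S)
    (hRS : ∀ k : ℕ, k < 2*M → rot ((k:ℝ)/M) ∈ S) :
    ∀ n : ℕ, 1 ≤ n → ∃ w : List H, (∀ x ∈ w, x ∈ S ∨ x⁻¹ ∈ S) ∧
      w.length ≤ 5 * Nat.log2 n + 1 ∧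
      ∀ x : ℝ, |x| ≤ bb M → w.prod (x : Circle1) = ((x + n*α : ℝ) : Circle1) := by
  intro n
  induction n using Nat.strong_induction_on with
  | _ n ih =>
    intro hn
    rcases eq_or_lt_of_le hn with h1 | h2
    · refine ⟨[rot α], ?_, ?_, ?_⟩
      · intro x hx
        rw [List.mem_singleton] at hx
        exact Or.inl (hx ▸ hTS)
      · simp
      · intro x hx
        rw [List.prod_singleton, rot_apply, ← h1]
        apply coe_congr 0
        push_cast
        ring
    · have hn2 : 2 ≤ n := h2
      obtain ⟨m, hm⟩ : ∃ m, m = n / 2 := ⟨_, rfl⟩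
      have hm1 : 1 ≤ m := by omega
      have hmn : m < n := by omega
      obtain ⟨w', hw'S, hw'len, hw'good⟩ := ih m hmn hm1
      obtain ⟨k₁, k₂, hk₁, hk₂, hgood2⟩ := good_double α M hM m w'.prod hw'good
      set w₂ : List H := rot ((k₁:ℝ)/M) :: Dmap M hM :: (rot ((k₂:ℝ)/M))⁻¹ ::
        (w' ++ [(Dmap M hM)⁻¹]) with hw₂
      have hw₂prod : w₂.prod
          = rot ((k₁:ℝ)/M) * Dmap M hM * (rot ((k₂:ℝ)/M))⁻¹ * w'.prod * (Dmap M hM)⁻¹ := by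
        rw [hw₂]
        simp [List.prod_cons, List.prod_append, mul_assoc]
      have hw₂S : ∀ x ∈ w₂, x ∈ S ∨ x⁻¹ ∈ S := by
        intro x hx
        rw [hw₂] at hx
        simp only [List.mem_cons, List.mem_append, List.mem_singleton, List.not_mem_nil,
          or_false] at hx
        rcases hx with rfl | rfl | rfl | hx | rfl
        · exact Or.inl (hRS k₁ hk₁)
        · exact Or.inl hDS
        · exact Or.inr (by simpa using hRS k₂ hk₂)
        · exact hw'S x hx
        · exact Or.inr (by simpa using hDS)
      have hw₂len : w₂.length = w'.length + 4 := by
        rw [hw₂]; simp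
      have hlogrec : Nat.log2 n = Nat.log2 m + 1 := by
        have := log2_rec hn2
        rw [← hm] at this
        exact this
      rcases Nat.even_or_odd n with he | ho
      · have hnm : n = 2 * m := by
          rcases he with ⟨t, ht⟩
          omega
        refine ⟨w₂, hw₂S, ?_, ?_⟩
        · rw [hw₂len, hlogrec]; omega
        · intro x hx
          rw [hw₂prod, hnm]
          exact_mod_cast hgood2 x hx
      · have hnm : n = 2 * m + 1 := by
          rcases ho with ⟨t, ht⟩
          omega
        refine ⟨rot α :: w₂, ?_, ?_, ?_⟩
        · intro x hx
          rcases List.mem_cons.mp hx with rfl | hx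
          · exact Or.inl hTS
          · exact hw₂S x hx
        · rw [List.length_cons, hw₂len, hlogrec]; omega
        · intro x hx
          have hstep := good_succ α M (2*m) w₂.prod (by
            intro y hy
            rw [hw₂prod]
            exact_mod_cast hgood2 y hy) x hx
          rw [List.prod_cons, hstep, hnm]
          apply coe_congr 0
          push_cast
          ring

end Good

end S3Aux
namespace S3Aux

lemma log2_le_log {n : ℕ} (hn : 2 ≤ n) :
    (Nat.log2 n : ℝ) * Real.log 2 ≤ Real.log n := by
  have h1 : 2 ^ Nat.log2 n ≤ n := Nat.log2_self_le (by omega)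
  have h2 : ((2:ℝ)) ^ Nat.log2 n ≤ (n:ℝ) := by exact_mod_cast h1
  have h3 := Real.log_le_log (by positivity) h2
  rwa [Real.log_pow] at h3

lemma one_le_log_div {n : ℕ} (hn : 2 ≤ n) : Real.log 2 ≤ Real.log n :=
  Real.log_le_log (by norm_num) (by exact_mod_cast hn)

lemma log_two_pos : (0:ℝ) < Real.log 2 := Real.log_pos (by norm_num)

/-- main numeric bound -/
lemma numeric_bound {n : ℕ} (hn : 2 ≤ n) {a b : ℝ} (ha : 0 ≤ a) (hb : 0 ≤ b) :
    a * (Nat.log2 n : ℝ) + b ≤ ((a + b)/Real.log 2) * Real.log n := by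
  have h1 := log2_le_log hn
  have h2 := one_le_log_div hn
  have h3 := log_two_pos
  rw [div_mul_eq_mul_div, le_div_iff₀ h3]
  have e1 : a * (Nat.log2 n : ℝ) * Real.log 2 ≤ a * Real.log n := by
    have := mul_le_mul_of_nonneg_left h1 ha
    calc a * (Nat.log2 n : ℝ) * Real.log 2 = a * ((Nat.log2 n : ℝ) * Real.log 2) := by ring
    _ ≤ a * Real.log n := this
  have e2 : b * Real.log 2 ≤ b * Real.log n := mul_le_mul_of_nonneg_left h2 hb
  nlinarith

section Main

theorem statement3_aux (α : ℝ) (g : Circle1 ≃ₜ Circle1)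
    (hgG : IsPAff g) (hg : TrivialOnSomeSet g ∨ IsRotation g) :
    ∃ S : Set (Circle1 ≃ₜ Circle1), S.Finite ∧ (∀ f ∈ S, IsPAff f) ∧
      rot α ∈ S ∧ g ∈ Subgroup.closure S ∧
      (∀ n : ℕ, rot α ^ n * g * (rot α ^ n)⁻¹ ∈ Subgroup.closure S) ∧
      ∃ C : ℝ, 0 < C ∧ ∀ n : ℕ, 2 ≤ n →
        (wordLength S (rot α ^ n * g * (rot α ^ n)⁻¹) : ℝ) ≤ C * Real.log n := by
  rcases hg with htriv | hrot
  · -- the trivial-on-a-set case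
    obtain ⟨I, hIopen, ⟨z₀, hz₀⟩, hId⟩ := htriv
    obtain ⟨p, rfl⟩ := QuotientAddGroup.mk_surjective z₀
    have hUopen : IsOpen (((↑·) : ℝ → Circle1) ⁻¹' I) := hIopen.preimage continuous_quotient_mk'
    obtain ⟨ε, hε, hball⟩ := Metric.isOpen_iff.mp hUopen p hz₀
    have hp : ∀ v : ℝ, |v| < ε → g ((p + v : ℝ) : Circle1) = ((p + v : ℝ) : Circle1) := by
      intro v hv
      apply hId
      apply hball
      rw [Metric.mem_ball, Real.dist_eq]
      simpa using hv
    -- choose M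
    obtain ⟨M₀, hM₀⟩ := exists_nat_gt (2/ε)
    set M : ℕ := M₀ + 5 with hMdef
    have hM : 5 ≤ M := by omega
    have hMp := hMpos M hM
    have hMe : 2/(M:ℝ) < ε := by
      have hM₀M : (2:ℝ)/ε < M := by
        rw [hMdef]; push_cast
        linarith
      rw [div_lt_iff₀ hMp]
      rw [div_lt_iff₀ hε] at hM₀M
      linarith
    set ρ : H := rot (1/2 - p) with hρ
    set D : H := Dmap M hM with hD
    set rotIm : Set H := (fun k : ℕ => rot ((k:ℝ)/(M:ℝ))) '' {k | k < 2*M} with hrotIm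
    set S : Set H := insert (rot α) (insert D (insert ρ (insert g rotIm))) with hS
    have hSfin : S.Finite := by
      rw [hS]
      refine Set.Finite.insert _ (Set.Finite.insert _ (Set.Finite.insert _
        (Set.Finite.insert _ ?_)))
      exact Set.Finite.image _ (Set.finite_lt_nat (2*M))
    have hSPAff : ∀ f ∈ S, IsPAff f := by
      intro f hf
      rw [hS] at hf
      rcases hf with rfl | rfl | rfl | rfl | hf
      · exact isPAff_rot α
      · exact isPAff_Dmap M hM
      · exact isPAff_rot _
      · exact hgG
      · obtain ⟨k, _, rfl⟩ := hf
        exact isPAff_rot _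
    have hTS : rot α ∈ S := by rw [hS]; exact Set.mem_insert _ _
    have hDS : D ∈ S := by rw [hS]; simp
    have hρS : ρ ∈ S := by rw [hS]; simp
    have hgS : g ∈ S := by rw [hS]; simp
    have hRS : ∀ k : ℕ, k < 2*M → rot ((k:ℝ)/M) ∈ S := by
      intro k hk
      rw [hS]
      right; right; right; right
      exact ⟨k, hk, rfl⟩
    refine ⟨S, hSfin, hSPAff, hTS, Subgroup.subset_closure hgS, ?_, ?_⟩
    · intro n
      exact mul_mem (mul_mem (pow_mem (Subgroup.subset_closure hTS) n)
        (Subgroup.subset_closure hgS)) (inv_mem (pow_mem (Subgroup.subset_closure hTS) n))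
    · refine ⟨17/Real.log 2, by positivity, ?_⟩
      intro n hn
      obtain ⟨w, hwS, hwlen, hwgood⟩ :=
        exists_good α M hM S hTS hDS hRS n (by omega)
      set V : H := ρ⁻¹ * w.prod * ρ with hV
      set W : List H := ρ⁻¹ :: (w ++ ([ρ, g, ρ⁻¹] ++ ((w.map (·⁻¹)).reverse ++ [ρ]))) with hW
      have hWprod : W.prod = V * g * V⁻¹ := by
        rw [hW, hV]
        simp only [List.prod_cons, List.prod_append, ← List.prod_inv_reverse,
          List.prod_singleton, List.prod_nil, mul_one, one_mul, mul_inv_rev, inv_inv]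
        group
      have hWlen : W.length = 2 * w.length + 5 := by
        rw [hW]
        simp
        omega
      have hWletters : ∀ x ∈ W, x ∈ S ∨ x⁻¹ ∈ S := by
        intro x hx
        rw [hW] at hx
        simp only [List.mem_cons, List.mem_append, List.mem_singleton,
          List.mem_reverse, List.mem_map, List.not_mem_nil, or_false] at hx
        rcases hx with rfl | hx | (rfl | rfl | rfl) | ⟨y, hy, rfl⟩ | rfl
        · exact Or.inr (by simpa using hρS)
        · exact hwS x hx
        · exact Or.inl hρS
        · exact Or.inl hgS
        · exact Or.inr (by simpa using hρS)
        · rcases hwS y hy with h | h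
          · exact Or.inr (by simpa using h)
          · exact Or.inl (by simpa using h)
        · exact Or.inl hρS
      -- the key conjugation identity
      have hbp := bb_pos M hM
      have hbh := bb_lt_half M hM
      have hconj : V * g * V⁻¹ = rot α ^ n * g * (rot α ^ n)⁻¹ := by
        apply conj_eq_conj V (rot α ^ n) g {z | ∃ x : ℝ, |x| ≤ bb M ∧ z = (ρ⁻¹ : H) ((x:ℝ) : Circle1)}
        · -- g is the identity off K
          intro z hz
          obtain ⟨x, hx12, hzx⟩ := exists_rep_half (ρ z)
          have hzz : z = (ρ⁻¹ : H) ((x:ℝ) : Circle1) := by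
            rw [← hzx, inv_apply_self]
          have hxb : bb M < |x| := by
            by_contra hc
            push_neg at hc
            exact hz ⟨x, hc, hzz⟩
          have hzval : z = ((x - (1/2 - p) : ℝ) : Circle1) := by
            rw [hzz, hρ, rot_inv_apply']
          rcases le_or_gt 0 x with hx0 | hx0
          · have hxpos : bb M < x := by rwa [abs_of_nonneg hx0] at hxb
            have hx2 : x ≤ 1/2 := by
              rw [abs_le] at hx12; exact hx12.2
            have hv : |x - 1/2| < ε := by
              rw [abs_of_nonpos (by linarith)]
              have : 1/2 - x < 2/(M:ℝ) := by
                have : bb M = 1/2 - 2/(M:ℝ) := rfl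
                linarith
              linarith
            have := hp (x - 1/2) hv
            rw [hzval, show x - (1/2 - p) = p + (x - 1/2) by ring]
            exact this
          · have hxneg : x < -bb M := by
              rw [abs_of_neg hx0] at hxb
              linarith
            have hx2 : -(1/2) ≤ x := by
              rw [abs_le] at hx12; exact hx12.1
            have hv : |x + 1/2| < ε := by
              rw [abs_of_nonneg (by linarith)]
              have : bb M = 1/2 - 2/(M:ℝ) := rfl
              linarith
            have hcoe : ((x - (1/2 - p) : ℝ) : Circle1) = ((p + (x + 1/2) : ℝ) : Circle1) :=
              coe_congr (-1) (by push_cast; ring)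
            rw [hzval, hcoe]
            exact hp (x + 1/2) hv
        · -- V agrees with rot α ^ n on K
          rintro z ⟨x, hxb, rfl⟩
          rw [hV]
          simp only [circleHomeo_mul_apply]
          rw [apply_inv]
          rw [hwgood x hxb]
          rw [rot_pow_apply, hρ, rot_inv_apply', rot_inv_apply', ← AddCircle.coe_add]
          apply coe_congr 0
          push_cast
          ring
      -- conclude
      have hwl : wordLength S (rot α ^ n * g * (rot α ^ n)⁻¹) ≤ 2 * w.length + 5 := by
        rw [← hWlen]
        exact wordLength_le S _ W hWletters (by rw [hWprod, hconj])
      have hwl2 : wordLength S (rot α ^ n * g * (rot α ^ n)⁻¹) ≤ 10 * Nat.log2 n + 7 := by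
        omega
      calc (wordLength S (rot α ^ n * g * (rot α ^ n)⁻¹) : ℝ)
          ≤ (10 * Nat.log2 n + 7 : ℕ) := by exact_mod_cast hwl2
        _ = 10 * (Nat.log2 n : ℝ) + 7 := by push_cast; ring
        _ ≤ ((10 + 7)/Real.log 2) * Real.log n := numeric_bound hn (by norm_num) (by norm_num)
        _ = 17/Real.log 2 * Real.log n := by norm_num
  · -- the rotation case
    obtain ⟨γ, rfl⟩ := hrot
    have hcomm : Commute (rot α) (rot γ) := by
      show rot α * rot γ = rot γ * rot α
      apply Homeomorph.ext
      intro z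
      simp only [circleHomeo_mul_apply, rot_apply']
      rw [← add_assoc, ← add_assoc, add_comm ((α:ℝ) : Circle1) ((γ:ℝ) : Circle1)]
    have hconj : ∀ n : ℕ, rot α ^ n * rot γ * (rot α ^ n)⁻¹ = rot γ := by
      intro n
      have h := (hcomm.pow_left n).eq
      rw [h, mul_assoc, mul_inv_cancel, mul_one]
    refine ⟨{rot α, rot γ}, Set.toFinite _, ?_, Set.mem_insert _ _,
      Subgroup.subset_closure (by simp), ?_, ⟨2, by norm_num, ?_⟩⟩
    · intro f hf
      rcases hf with rfl | hf
      · exact isPAff_rot α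
      · rw [Set.mem_singleton_iff] at hf
        rw [hf]
        exact isPAff_rot γ
    · intro n
      rw [hconj n]
      exact Subgroup.subset_closure (by simp)
    · intro n hn
      rw [hconj n]
      have h1 : wordLength {rot α, rot γ} (rot γ) ≤ 1 := by
        apply wordLength_le _ _ [rot γ] _ (List.prod_singleton)
        intro x hx
        rw [List.mem_singleton] at hx
        subst hx
        exact Or.inl (by simp)
      have h2 : (wordLength {rot α, rot γ} (rot γ) : ℝ) ≤ 1 := by exact_mod_cast h1
      have h3 := one_le_log_div hn
      have h4 := Real.log_two_gt_d9
      linarith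

end Main

end S3Aux

/-- Lemma 1 for `PAff₊(S¹)`: conjugates `T_α^n g T_α^{-n}` have word length `O(log n)`. -/
theorem statement3 (α : ℝ) (hα : Irrational α) (g : Circle1 ≃ₜ Circle1)
    (hgG : IsPAff g) (hg : TrivialOnSomeSet g ∨ IsRotation g) :
    ∃ S : Set (Circle1 ≃ₜ Circle1), S.Finite ∧ (∀ f ∈ S, IsPAff f) ∧
      rot α ∈ S ∧ g ∈ Subgroup.closure S ∧
      (∀ n : ℕ, rot α ^ n * g * (rot α ^ n)⁻¹ ∈ Subgroup.closure S) ∧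
      ∃ C : ℝ, 0 < C ∧ ∀ n : ℕ, 2 ≤ n →
        (wordLength S (rot α ^ n * g * (rot α ^ n)⁻¹) : ℝ) ≤ C * Real.log n := by
  exact S3Aux.statement3_aux α g hgG hg
end
end

section
/- Let α be irrational and let G be a group of homeomorphisms of ℝ/ℤ containing T_α. Suppose there exist g_1, …, g_l ∈ G, integers k, k_1, …, k_l with k ≠ k_1 + ⋯ + k_l, and β₀ > 0 such that for every β ∈ (0, β₀) the rotation x = T_β satisfies x^{k_1} g_1 x^{k_2} g_2 ⋯ x^{k_l} g_l = x^{k}. Suppose moreover that 𝒢 ⊆ G is a finite set containing T_α such that for each j ∈ {1,…,l} there is a constant C_j > 0 with the elements T_α^{n(k_1+⋯+k_j)} g_j T_α^{−n(k_1+⋯+k_j)} lying in the subgroup generated by 𝒢 and ℓ_𝒢(T_α^{n(k_1+⋯+k_j)} g_j T_α^{−n(k_1+⋯+k_j)}) ≤ C_j log n for all n ≥ 2. Then T_α is distorted in G; in particular lim_{n→∞} ℓ_𝒢(T_α^n)/n = 0. -/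
open Filter Set

noncomputable section

-- rot lemmas
lemma rot_apply (a : ℝ) (x : Circle1) : rot a x = (a : Circle1) + x := rfl

lemma rot_mul (a b : ℝ) : rot a * rot b = rot (a + b) := by
  refine Homeomorph.ext fun x => ?_
  show (a : Circle1) + ((b:Circle1) + x) = ((a:Circle1)+(b:Circle1)) + x
  rw [add_assoc]

lemma rot_zero : rot 0 = 1 := by
  refine Homeomorph.ext fun x => ?_
  show ((0:ℝ) : Circle1) + x = x
  simp

lemma rot_pow (a : ℝ) (n : ℕ) : rot a ^ n = rot (n * a) := by
  induction n with
  | zero => simpa using rot_zero.symm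
  | succ n ih => rw [pow_succ, ih, rot_mul]; push_cast; ring_nf

lemma rot_inv (a : ℝ) : (rot a)⁻¹ = rot (-a) := by
  refine inv_eq_of_mul_eq_one_right ?_
  rw [rot_mul]; simpa using rot_zero

lemma rot_zpow (a : ℝ) (m : ℤ) : rot a ^ m = rot (m * a) := by
  cases m with
  | ofNat n => simpa using rot_pow a n
  | negSucc n =>
      rw [zpow_negSucc, rot_pow, rot_inv]
      norm_num [Int.negSucc_eq]
      ring_nf

lemma rot_intCast (m : ℤ) : rot (m : ℝ) = 1 := by
  refine Homeomorph.ext fun x => ?_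
  show (((m:ℝ)) : Circle1) + x = x
  have : (((m:ℝ)) : Circle1) = 0 := (AddCircle.coe_eq_zero_iff 1).2 ⟨m, by simp⟩
  rw [this, zero_add]

lemma rot_fract (x : ℝ) : rot (Int.fract x) = rot x := by
  have := rot_mul (Int.fract x) (⌊x⌋ : ℝ)
  rw [rot_intCast, mul_one, Int.fract_add_floor] at this
  exact this

lemma rot_eq_one_iff {a : ℝ} : rot a = 1 ↔ (a : Circle1) = 0 := by
  constructor
  · intro h
    have h0 := congrArg (fun f : Circle1 ≃ₜ Circle1 => f 0) h
    calc (a : Circle1) = rot a 0 := (add_zero _).symm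
      _ = (1 : Circle1 ≃ₜ Circle1) 0 := h0
      _ = 0 := rfl
  · intro h
    refine Homeomorph.ext fun x => ?_
    show (a : Circle1) + x = x
    rw [h, zero_add]

-- word length lemmas
def HasWord (S : Set (Circle1 ≃ₜ Circle1)) (g : Circle1 ≃ₜ Circle1) : Prop :=
  ∃ w : List (Circle1 ≃ₜ Circle1), (∀ x ∈ w, x ∈ S ∨ x⁻¹ ∈ S) ∧ w.prod = g

lemma HasWord.one (S : Set (Circle1 ≃ₜ Circle1)) : HasWord S 1 := ⟨[], by simp, rfl⟩

lemma HasWord.of_mem {S : Set (Circle1 ≃ₜ Circle1)} {g} (hg : g ∈ S) : HasWord S g :=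
  ⟨[g], by simpa using Or.inl hg, by simp⟩

lemma HasWord.mul {S} {a b} (ha : HasWord S a) (hb : HasWord S b) : HasWord S (a * b) := by
  obtain ⟨w, hw, hwp⟩ := ha; obtain ⟨v, hv, hvp⟩ := hb
  exact ⟨w ++ v, by intro x hx; rcases List.mem_append.1 hx with h | h; exacts [hw x h, hv x h],
    by rw [List.prod_append, hwp, hvp]⟩

lemma HasWord.inv {S} {a} (ha : HasWord S a) : HasWord S a⁻¹ := by
  obtain ⟨w, hw, hwp⟩ := ha
  refine ⟨(w.map fun x => x⁻¹).reverse, ?_, by rw [← List.prod_inv_reverse, hwp]⟩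
  intro x hx
  rw [List.mem_reverse, List.mem_map] at hx
  obtain ⟨y, hy, rfl⟩ := hx
  rcases hw y hy with h | h
  · exact Or.inr (by simpa using h)
  · exact Or.inl h

lemma HasWord.of_closure {S : Set (Circle1 ≃ₜ Circle1)} {g} (hg : g ∈ Subgroup.closure S) :
    HasWord S g := by
  induction hg using Subgroup.closure_induction with
  | mem x hx => exact HasWord.of_mem hx
  | one => exact HasWord.one S
  | mul x y _ _ hx hy => exact hx.mul hy
  | inv x _ hx => exact hx.inv

lemma HasWord.pow {S} {a} (ha : HasWord S a) (n : ℕ) : HasWord S (a ^ n) := by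
  induction n with
  | zero => simpa using HasWord.one S
  | succ n ih => rw [pow_succ]; exact ih.mul ha

lemma wordLength_le {S : Set (Circle1 ≃ₜ Circle1)} {g} (w : List (Circle1 ≃ₜ Circle1))
    (hw : ∀ x ∈ w, x ∈ S ∨ x⁻¹ ∈ S) (hwp : w.prod = g) : wordLength S g ≤ w.length :=
  Nat.sInf_le ⟨w, rfl, hw, hwp⟩

lemma exists_min_word {S : Set (Circle1 ≃ₜ Circle1)} {g} (hg : HasWord S g) :
    ∃ w : List (Circle1 ≃ₜ Circle1), w.length = wordLength S g ∧
      (∀ x ∈ w, x ∈ S ∨ x⁻¹ ∈ S) ∧ w.prod = g := by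
  have : wordLength S g ∈ {n | ∃ w : List (Circle1 ≃ₜ Circle1),
      w.length = n ∧ (∀ x ∈ w, x ∈ S ∨ x⁻¹ ∈ S) ∧ w.prod = g} := by
    apply Nat.sInf_mem
    obtain ⟨w, hw, hwp⟩ := hg
    exact ⟨w.length, w, rfl, hw, hwp⟩
  exact this

lemma wordLength_mul_le {S} {a b} (ha : HasWord S a) (hb : HasWord S b) :
    wordLength S (a * b) ≤ wordLength S a + wordLength S b := by
  obtain ⟨w, hwl, hw, hwp⟩ := exists_min_word ha
  obtain ⟨v, hvl, hv, hvp⟩ := exists_min_word hb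
  have := wordLength_le (S := S) (w ++ v)
    (by intro x hx; rcases List.mem_append.1 hx with h | h; exacts [hw x h, hv x h])
    (by rw [List.prod_append, hwp, hvp])
  simpa [hwl, hvl] using this

lemma wordLength_inv_le {S} {a} (ha : HasWord S a) :
    wordLength S a⁻¹ ≤ wordLength S a := by
  obtain ⟨w, hwl, hw, hwp⟩ := exists_min_word ha
  have := wordLength_le (S := S) ((w.map fun x => x⁻¹).reverse)
    (by
      intro x hx
      rw [List.mem_reverse, List.mem_map] at hx
      obtain ⟨y, hy, rfl⟩ := hx
      rcases hw y hy with h | h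
      · exact Or.inr (by simpa using h)
      · exact Or.inl h)
    (by rw [← List.prod_inv_reverse, hwp])
  simpa [hwl] using this

lemma wordLength_pow_le {S} {a} (ha : HasWord S a) (n : ℕ) :
    wordLength S (a ^ n) ≤ n * wordLength S a := by
  induction n with
  | zero => simpa using wordLength_le [] (by simp) (by simp)
  | succ n ih =>
      rw [pow_succ]
      calc wordLength S (a ^ n * a) ≤ wordLength S (a ^ n) + wordLength S a :=
            wordLength_mul_le (ha.pow n) ha
        _ ≤ n * wordLength S a + wordLength S a := by omega
        _ = (n + 1) * wordLength S a := by ring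

lemma HasWord.list_prod {S} (w : List (Circle1 ≃ₜ Circle1)) (hw : ∀ g ∈ w, HasWord S g) :
    HasWord S w.prod := by
  induction w with
  | nil => simpa using HasWord.one S
  | cons a v ih =>
      rw [List.prod_cons]
      exact (hw a (by simp)).mul (ih fun g hg => hw g (by simp [hg]))

lemma wordLength_list_prod_le {S} (w : List (Circle1 ≃ₜ Circle1))
    (hw : ∀ g ∈ w, HasWord S g) :
    wordLength S w.prod ≤ (w.map (wordLength S)).sum := by
  induction w with
  | nil => simpa using wordLength_le [] (by simp) (by simp)
  | cons a w ih =>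
      have ha : HasWord S a := hw a (by simp)
      have hw' : ∀ g ∈ w, HasWord S g := fun g hg => hw g (by simp [hg])
      have hprod : HasWord S w.prod := HasWord.list_prod w hw'
      rw [List.prod_cons, List.map_cons, List.sum_cons]
      exact le_trans (wordLength_mul_le ha hprod) (by have := ih hw'; omega)


-- the partial-sum / conjugation identity
lemma Iic_fin_succ (l : ℕ) (j : Fin l) :
    (Finset.Iic (j.succ : Fin (l+1))) =
      Finset.cons 0 ((Finset.Iic j).map (Fin.succEmb l)) (by
        simp only [Finset.mem_map]
        rintro ⟨a, -, ha⟩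
        exact (Fin.succ_ne_zero a) ha) := by
  ext i
  simp only [Finset.mem_Iic, Finset.mem_cons, Finset.mem_map]
  induction i using Fin.cases with
  | zero => simp
  | succ i' =>
      simp only [Fin.succ_le_succ_iff]
      constructor
      · intro h; exact Or.inr ⟨i', by simpa using h, rfl⟩
      · rintro (h | ⟨a, ha, haa⟩)
        · exact (Fin.succ_ne_zero i' h).elim
        · have : a = i' := Fin.succ_injective _ (by simpa using haa)
          subst this; simpa using ha

lemma sum_Iic_fin_succ (l : ℕ) (f : Fin (l+1) → ℤ) (j : Fin l) :
    ∑ i ∈ Finset.Iic (j.succ : Fin (l+1)), f i = f 0 + ∑ i ∈ Finset.Iic j, f i.succ := by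
  rw [Iic_fin_succ, Finset.sum_cons, Finset.sum_map]
  rfl

lemma Iic_fin_zero (l : ℕ) : (Finset.Iic (0 : Fin (l+1))) = {0} := by
  ext i; simp [Fin.le_zero_iff]

lemma conj_identity {H : Type*} [Group H] :
    ∀ (l : ℕ) (g : Fin l → H) (kv : Fin l → ℤ) (x : H) (c : ℤ),
    (List.ofFn fun i => x ^ kv i * g i).prod =
      x ^ (-c) * (List.ofFn fun j => x ^ (c + ∑ i ∈ Finset.Iic j, kv i) * g j *
        (x ^ (c + ∑ i ∈ Finset.Iic j, kv i))⁻¹).prod * x ^ (c + ∑ i, kv i) := by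
  intro l
  induction l with
  | zero =>
      intro g kv x c
      simp [← zpow_add]
  | succ l ih =>
      intro g kv x c
      rw [List.ofFn_succ, List.ofFn_succ, List.prod_cons, List.prod_cons]
      rw [ih (fun i => g i.succ) (fun i => kv i.succ) x (c + kv 0)]
      have hsum : ∀ j : Fin l, c + kv 0 + ∑ i ∈ Finset.Iic j, kv i.succ
          = c + ∑ i ∈ Finset.Iic (j.succ : Fin (l+1)), kv i := by
        intro j; rw [sum_Iic_fin_succ]; ring
      have htot : c + kv 0 + ∑ i : Fin l, kv i.succ = c + ∑ i : Fin (l+1), kv i := by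
        rw [Fin.sum_univ_succ]; ring
      have h0 : ∑ i ∈ Finset.Iic (0 : Fin (l+1)), kv i = kv 0 := by
        rw [Iic_fin_zero]; simp
      simp only [hsum, htot, h0]
      generalize (List.ofFn fun j : Fin l =>
        x ^ (c + ∑ i ∈ Finset.Iic (j.succ : Fin (l+1)), kv i) * g j.succ *
          (x ^ (c + ∑ i ∈ Finset.Iic (j.succ : Fin (l+1)), kv i))⁻¹).prod = P
      generalize hkv0 : kv 0 = k0
      generalize hg0 : g 0 = G0
      rw [show x ^ k0 * G0 * (x ^ (-(c + k0)) * P * x ^ (c + ∑ i : Fin (l+1), kv i))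
        = (x ^ k0 * G0 * x ^ (-(c+k0))) * P * x ^ (c + ∑ i : Fin (l+1), kv i) by group,
        show x ^ (-c) * (x ^ (c + k0) * G0 * (x ^ (c + k0))⁻¹ * P) * x ^ (c + ∑ i : Fin (l+1), kv i)
        = (x ^ (-c) * (x ^ (c + k0) * G0 * (x ^ (c + k0))⁻¹)) * P * x ^ (c + ∑ i : Fin (l+1), kv i) by group]
      congr 2
      group

-- density of the irrational rotation orbit near 0
lemma exists_fract_lt {ξ : ℝ} (hξ : Irrational ξ) {ε : ℝ} (hε : 0 < ε) (hε1 : ε ≤ 1) :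
    ∃ m : ℕ, 1 ≤ m ∧ Int.fract (m * ξ) < ε := by
  obtain ⟨n₀, hn₀⟩ := exists_nat_one_div_lt hε
  obtain ⟨j, k, hk0, hkn, hjk⟩ := Real.exists_int_int_abs_mul_sub_le ξ (n := n₀ + 1) (by omega)
  set δ : ℝ := k * ξ - j with hδ
  have hδε : |δ| < ε := lt_of_le_of_lt hjk (by
    calc (1:ℝ) / (↑(n₀+1) + 1) ≤ 1 / (↑n₀ + 1) := by
          apply div_le_div_of_nonneg_left one_pos.le (by positivity)
          push_cast; linarith
      _ < ε := hn₀)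
  have hkξ : Irrational ((k:ℝ) * ξ) := hξ.intCast_mul (by omega)
  have hδ0 : δ ≠ 0 := by
    intro h
    apply hkξ.ne_int j
    rw [hδ] at h; linarith
  have hfract : ∀ r : ℤ, Int.fract (((r * k : ℤ) : ℝ) * ξ) = Int.fract ((r:ℝ) * δ) := by
    intro r
    have h1 : ((r * k : ℤ) : ℝ) * ξ = (r:ℝ) * δ + ((r * j : ℤ) : ℝ) := by
      rw [hδ]; push_cast; ring
    rw [h1, Int.fract_add_intCast]
  rcases lt_or_gt_of_ne hδ0 with hneg | hpos
  · -- δ < 0 : use the multiple trick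
    set δ' : ℝ := -δ with hδ'
    have hδ'pos : 0 < δ' := by simp [hδ']; linarith
    have habs : |δ| = δ' := abs_of_neg hneg
    have hδ'lt : δ' < ε := habs ▸ hδε
    have hδ'irr : Irrational δ' := by
      have h2 : δ' = ((j : ℤ) : ℝ) + -((k:ℝ)*ξ) := by rw [hδ', hδ]; push_cast; ring
      rw [h2]
      exact hkξ.neg.intCast_add _
    set r : ℤ := ⌊1 / δ'⌋ with hr
    have h1δ' : (1:ℝ) < 1 / δ' := (one_lt_div hδ'pos).2 (by linarith)
    have hr1 : 1 ≤ r := Int.le_floor.2 (by exact_mod_cast h1δ'.le)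
    have hrle : (r : ℝ) ≤ 1 / δ' := Int.floor_le _
    have hrpos : (0:ℝ) < r := by exact_mod_cast (by omega : (0:ℤ) < r)
    have hrlt : (r : ℝ) * δ' < 1 := by
      rcases lt_or_eq_of_le hrle with h | h
      · calc (r:ℝ) * δ' < (1/δ') * δ' := mul_lt_mul_of_pos_right h hδ'pos
          _ = 1 := by field_simp
      · exfalso
        apply hδ'irr
        refine ⟨((r:ℚ))⁻¹, ?_⟩
        have hmul : δ' * (r:ℝ) = 1 := by rw [h]; field_simp
        have hδ'eq : δ' = (r:ℝ)⁻¹ := eq_inv_of_mul_eq_one_left hmul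
        rw [hδ'eq]; push_cast; ring
    have hrgt : 1 < ((r:ℝ) + 1) * δ' := by
      have := Int.lt_floor_add_one (1 / δ')
      calc (1:ℝ) = (1/δ') * δ' := by field_simp
        _ < ((r:ℝ) + 1) * δ' := by
            apply mul_lt_mul_of_pos_right _ hδ'pos
            exact_mod_cast this
    refine ⟨(r * k).toNat, ?_, ?_⟩
    · have : 1 ≤ r * k := by nlinarith
      omega
    · have hcast : (((r * k).toNat : ℕ) : ℝ) = ((r * k : ℤ) : ℝ) := by
        exact_mod_cast congrArg (Int.cast : ℤ → ℝ) (Int.toNat_of_nonneg (by nlinarith))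
      rw [hcast, hfract r]
      have h3 : (r:ℝ) * δ = -((r:ℝ) * δ') := by rw [hδ']; ring
      have h4 : Int.fract ((r:ℝ) * δ) = 1 - (r:ℝ) * δ' := by
        rw [h3]
        have : -((r:ℝ) * δ') = (1 - (r:ℝ)*δ') + ((-1 : ℤ):ℝ) := by push_cast; ring
        rw [this, Int.fract_add_intCast, Int.fract_eq_self.2 ⟨by linarith, by nlinarith⟩]
      rw [h4]
      linarith
  · -- δ > 0 : directly
    refine ⟨k.toNat, by omega, ?_⟩
    have hk' : (k.toNat : ℤ) = k := Int.toNat_of_nonneg hk0.le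
    have hcast : ((k.toNat : ℕ) : ℝ) = ((1 * k : ℤ) : ℝ) := by
      rw [one_mul]; exact_mod_cast congrArg (Int.cast : ℤ → ℝ) hk'
    rw [hcast, hfract 1]
    have h1δ : ((1:ℤ):ℝ) * δ = δ := by push_cast; ring
    rw [h1δ, Int.fract_eq_self.2 ⟨hpos.le, by rw [← abs_of_pos hpos]; linarith⟩]
    rw [← abs_of_pos hpos]; exact hδε

lemma exists_fract_lt_ge {ξ : ℝ} (hξ : Irrational ξ) {ε : ℝ} (hε : 0 < ε) (hε1 : ε ≤ 1)
    (M : ℕ) : ∃ n : ℕ, M ≤ n ∧ 1 ≤ n ∧ Int.fract (n * ξ) < ε := by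
  have hξ' : Irrational (((M+1 : ℕ) : ℤ) * ξ) := hξ.intCast_mul (by exact_mod_cast Nat.succ_ne_zero M)
  obtain ⟨m, hm1, hm⟩ := exists_fract_lt (by exact_mod_cast hξ') hε hε1
  refine ⟨m * (M + 1), ?_, ?_, ?_⟩
  · nlinarith
  · nlinarith
  · have : ((m * (M+1) : ℕ) : ℝ) * ξ = (m:ℝ) * ((((M+1:ℕ):ℤ):ℝ) * ξ) := by push_cast; ring
    rw [this]
    exact_mod_cast hm

lemma pow_zpow_aux {H : Type*} [Group H] (a : H) (n : ℕ) (m : ℤ) :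
    (a ^ n) ^ m = a ^ ((n : ℤ) * m) := by
  rw [← zpow_natCast a n, ← zpow_mul]


/-- Deduction of the theorem from the two lemmas: if a nontrivial relation
`x^{k₁} g₁ ⋯ x^{k_l} g_l = x^k` holds for all small rotations `x = T_β`, and the
conjugates `T_α^{n(k₁+⋯+k_j)} g_j T_α^{-n(k₁+⋯+k_j)}` have word length `O(log n)`
with respect to a finite set `S ∋ T_α`, then `T_α` is distorted:
`ℓ_S(T_α^n)/n → 0`. -/
theorem statement7 (α : ℝ) (hα : Irrational α) (G : Subgroup (Circle1 ≃ₜ Circle1))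
    (hαG : rot α ∈ G)
    (l : ℕ) (g : Fin l → Circle1 ≃ₜ Circle1) (hgG : ∀ i, g i ∈ G)
    (k : ℤ) (kv : Fin l → ℤ) (hk : k ≠ ∑ i, kv i) (β₀ : ℝ) (hβ₀ : 0 < β₀)
    (hrel : ∀ β ∈ Ioo (0 : ℝ) β₀,
      (List.ofFn fun i => rot β ^ kv i * g i).prod = rot β ^ k)
    (S : Set (Circle1 ≃ₜ Circle1)) (hSfin : S.Finite) (hSG : S ⊆ (G : Set (Circle1 ≃ₜ Circle1)))
    (hαS : rot α ∈ S)
    (hlog : ∀ j : Fin l, ∃ C : ℝ, 0 < C ∧ ∀ n : ℕ, 2 ≤ n →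
      rot α ^ ((n : ℤ) * ∑ i ∈ Finset.Iic j, kv i) * g j *
          (rot α ^ ((n : ℤ) * ∑ i ∈ Finset.Iic j, kv i))⁻¹ ∈ Subgroup.closure S ∧
      (wordLength S (rot α ^ ((n : ℤ) * ∑ i ∈ Finset.Iic j, kv i) * g j *
          (rot α ^ ((n : ℤ) * ∑ i ∈ Finset.Iic j, kv i))⁻¹) : ℝ) ≤ C * Real.log n) :
    Tendsto (fun n : ℕ => (wordLength S (rot α ^ n) : ℝ) / n) atTop (nhds 0) := by
  choose C hC using hlog
  set Csum : ℝ := ∑ j, C j with hCsum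
  have hCsum0 : 0 ≤ Csum := Finset.sum_nonneg fun j _ => (hC j).1.le
  set d : ℤ := k - ∑ i, kv i with hd
  have hd0 : d ≠ 0 := sub_ne_zero.2 hk
  set D : ℕ := d.natAbs with hD
  have hD1 : 1 ≤ D := Int.natAbs_pos.2 hd0
  set ε' : ℝ := min β₀ 1 with hε'
  have hε'pos : 0 < ε' := lt_min hβ₀ one_pos
  have hε'le : ε' ≤ 1 := min_le_right _ _
  rw [Metric.tendsto_atTop]
  intro ε hε
  -- choose threshold for log bound
  have hlim : Tendsto (fun n : ℕ => Csum * (Real.log n / n)) atTop (nhds 0) := by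
    have h1 : Tendsto (fun x : ℝ => Real.log x / x) atTop (nhds 0) :=
      Real.isLittleO_log_id_atTop.tendsto_div_nhds_zero
    have h2 := (h1.comp tendsto_natCast_atTop_atTop).const_mul Csum
    simpa using h2
  have hev : ∀ᶠ m : ℕ in atTop, Csum * (Real.log m / m) < ε / 2 :=
    hlim.eventually_lt_const (by positivity)
  obtain ⟨M₀, hM₀⟩ := eventually_atTop.1 hev
  -- choose n with small fractional part
  obtain ⟨n, hnM, hn1, hfr⟩ := exists_fract_lt_ge hα hε'pos hε'le (max M₀ 2)
  have hn2 : 2 ≤ n := le_trans (le_max_right _ _) hnM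
  have hnlog : Csum * (Real.log n / n) < ε / 2 := hM₀ n (le_trans (le_max_left _ _) hnM)
  -- the relation at β = fract (n α)
  have hnα : Irrational ((n:ℝ) * α) := by
    have := hα.intCast_mul (show ((n:ℕ):ℤ) ≠ 0 by exact_mod_cast (by omega : n ≠ 0))
    exact_mod_cast this
  set β : ℝ := Int.fract ((n:ℝ) * α) with hβ
  have hβpos : 0 < β := Int.fract_pos.2 (hnα.ne_int _)
  have hβlt : β < β₀ := lt_of_lt_of_le hfr (min_le_left _ _)
  have hx : rot β = rot α ^ (n:ℕ) := by rw [rot_pow]; exact rot_fract _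
  have hrel' := hrel β ⟨hβpos, hβlt⟩
  rw [hx] at hrel'
  have hid := conj_identity l g kv (rot α ^ (n:ℕ)) 0
  simp only [neg_zero, zpow_zero, one_mul, zero_add] at hid
  -- the conjugates
  set e : Fin l → (Circle1 ≃ₜ Circle1) := fun j =>
    rot α ^ ((n : ℤ) * ∑ i ∈ Finset.Iic j, kv i) * g j *
      (rot α ^ ((n : ℤ) * ∑ i ∈ Finset.Iic j, kv i))⁻¹ with he
  have hentry : (List.ofFn fun j : Fin l =>
      (rot α ^ (n:ℕ)) ^ (∑ i ∈ Finset.Iic j, kv i) * g j *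
        ((rot α ^ (n:ℕ)) ^ (∑ i ∈ Finset.Iic j, kv i))⁻¹) = List.ofFn e := by
    refine congrArg _ (funext fun j => ?_)
    rw [he, pow_zpow_aux]
  rw [hentry] at hid
  have hP : (List.ofFn e).prod = rot α ^ ((n:ℤ) * d) := by
    have h1 : (List.ofFn e).prod * (rot α ^ (n:ℕ)) ^ (∑ i, kv i) = (rot α ^ (n:ℕ)) ^ k := by
      rw [← hid, hrel']
    have h2 : (List.ofFn e).prod
        = (rot α ^ (n:ℕ)) ^ k * ((rot α ^ (n:ℕ)) ^ (∑ i, kv i))⁻¹ :=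
      eq_mul_inv_of_mul_eq h1
    rw [h2, pow_zpow_aux, pow_zpow_aux, ← zpow_neg, ← zpow_add, hd]
    ring_nf
  have heword : ∀ j : Fin l, HasWord S (e j) := fun j =>
    HasWord.of_closure ((hC j).2 n hn2).1
  have hewl : ∀ j : Fin l, (wordLength S (e j) : ℝ) ≤ C j * Real.log n := fun j =>
    ((hC j).2 n hn2).2
  have hPword : HasWord S ((List.ofFn e).prod) := by
    refine HasWord.list_prod _ fun x hxx => ?_
    obtain ⟨j, rfl⟩ := List.mem_ofFn.1 hxx
    exact heword j
  have hPwl : (wordLength S ((List.ofFn e).prod) : ℝ) ≤ Csum * Real.log n := by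
    have h1 := wordLength_list_prod_le (S := S) (List.ofFn e) (fun x hxx => by
      obtain ⟨j, rfl⟩ := List.mem_ofFn.1 hxx; exact heword j)
    have h2 : ((List.ofFn e).map (wordLength S)).sum = ∑ j, wordLength S (e j) := by
      rw [List.map_ofFn, List.sum_ofFn]; rfl
    rw [h2] at h1
    calc (wordLength S ((List.ofFn e).prod) : ℝ) ≤ ((∑ j, wordLength S (e j) : ℕ) : ℝ) := by
          exact_mod_cast h1
      _ = ∑ j, (wordLength S (e j) : ℝ) := by push_cast; rfl
      _ ≤ ∑ j, C j * Real.log n := Finset.sum_le_sum fun j _ => hewl j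
      _ = Csum * Real.log n := by rw [hCsum, Finset.sum_mul]
  -- the power N
  set N : ℕ := n * D with hN
  have hN1 : 1 ≤ N := by
    rw [hN]; exact Nat.one_le_iff_ne_zero.2 (Nat.mul_ne_zero (by omega) (by omega))
  have hNrot : rot α ^ (N:ℕ) = rot α ^ ((n:ℤ) * d) ∨
      rot α ^ (N:ℕ) = (rot α ^ ((n:ℤ) * d))⁻¹ := by
    rcases Int.natAbs_eq d with h | h
    · left
      rw [← zpow_natCast (rot α) N]
      congr 1
      rw [hN]; push_cast; rw [← h]
    · right
      rw [← zpow_natCast (rot α) N, ← zpow_neg]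
      congr 1
      rw [hN]; push_cast
      have : (d:ℤ) = -(D:ℤ) := h
      rw [this]; ring
  have hNword : HasWord S (rot α ^ (N:ℕ)) := by
    rcases hNrot with h | h
    · rw [h, ← hP]; exact hPword
    · rw [h, ← hP]; exact hPword.inv
  have hNwl : (wordLength S (rot α ^ (N:ℕ)) : ℝ) ≤ Csum * Real.log n := by
    rcases hNrot with h | h
    · rw [h, ← hP]; exact hPwl
    · rw [h, ← hP]
      calc (wordLength S ((List.ofFn e).prod)⁻¹ : ℝ)
          ≤ (wordLength S ((List.ofFn e).prod) : ℝ) := by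
            exact_mod_cast wordLength_inv_le hPword
        _ ≤ Csum * Real.log n := hPwl
  set W : ℕ := wordLength S (rot α ^ (N:ℕ)) with hW
  -- general word length bound
  have key : ∀ m : ℕ, wordLength S (rot α ^ m) ≤ (m / N) * W + (m % N) := by
    intro m
    have hsplit : rot α ^ m = (rot α ^ N) ^ (m / N) * rot α ^ (m % N) := by
      rw [← pow_mul, ← pow_add]
      congr 1
      exact (Nat.div_add_mod m N).symm
    rw [hsplit]
    have hα1 : wordLength S (rot α) ≤ 1 :=
      wordLength_le [rot α] (by simpa using Or.inl hαS) (by simp)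
    calc wordLength S ((rot α ^ N) ^ (m / N) * rot α ^ (m % N))
        ≤ wordLength S ((rot α ^ N) ^ (m / N)) + wordLength S (rot α ^ (m % N)) :=
          wordLength_mul_le (hNword.pow _) ((HasWord.of_mem hαS).pow _)
      _ ≤ (m / N) * W + (m % N) := by
          have h1 := wordLength_pow_le hNword (m / N)
          have h2 := wordLength_pow_le (HasWord.of_mem hαS) (m % N)
          have h3 : (m % N) * wordLength S (rot α) ≤ m % N := by
            calc (m % N) * wordLength S (rot α) ≤ (m % N) * 1 :=
              Nat.mul_le_mul_left _ hα1
              _ = m % N := by omega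
          exact add_le_add h1 (le_trans h2 h3)
  -- conclude
  have hNpos : (0:ℝ) < (N:ℕ) := by exact_mod_cast hN1
  have hlogn0 : 0 ≤ Real.log n := Real.log_nonneg (by exact_mod_cast (by omega : 1 ≤ n))
  have hAN : Csum * Real.log n / (N:ℝ) < ε / 2 := by
    calc Csum * Real.log n / (N:ℝ) ≤ Csum * Real.log n / (n:ℝ) := by
          apply div_le_div_of_nonneg_left (by positivity) (by positivity)
          rw [hN]; push_cast
          nlinarith [(by exact_mod_cast hD1 : (1:ℝ) ≤ (D:ℕ)), (by positivity : (0:ℝ) < (n:ℕ))]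
      _ = Csum * (Real.log n / n) := by ring
      _ < ε / 2 := hnlog
  obtain ⟨m₀, hm₀⟩ := exists_nat_gt (2 * (N:ℝ) / ε)
  refine ⟨m₀ + 1, fun m hm => ?_⟩
  have hmge : (2 * (N:ℝ) / ε) < m := lt_of_lt_of_le hm₀ (by exact_mod_cast (by omega : m₀ ≤ m))
  have hmpos : (0:ℝ) < m := lt_of_le_of_lt (by positivity) hmge
  have hwl : (wordLength S (rot α ^ m) : ℝ) ≤ (m:ℝ) * (Csum * Real.log n / N) + N := by
    have h1 := key m
    have h2 : ((m / N : ℕ) : ℝ) * (W:ℝ) ≤ ((m:ℝ) / (N:ℝ)) * (Csum * Real.log n) := by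
      apply mul_le_mul Nat.cast_div_le hNwl (by positivity) (by positivity)
    have h3 : ((m % N : ℕ) : ℝ) ≤ (N:ℝ) := by
      exact_mod_cast (Nat.mod_lt m (by omega)).le
    calc (wordLength S (rot α ^ m) : ℝ) ≤ ((m / N : ℕ) : ℝ) * (W:ℝ) + ((m % N : ℕ) : ℝ) := by
          exact_mod_cast h1
      _ ≤ ((m:ℝ) / (N:ℝ)) * (Csum * Real.log n) + (N:ℝ) := add_le_add h2 h3
      _ = (m:ℝ) * (Csum * Real.log n / N) + N := by ring
  have hfinal : (wordLength S (rot α ^ m) : ℝ) / m < ε := by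
    have hdiv : (wordLength S (rot α ^ m) : ℝ) / m
        ≤ ((m:ℝ) * (Csum * Real.log n / N) + N) / m := by gcongr
    have heq : ((m:ℝ) * (Csum * Real.log n / N) + N) / m
        = Csum * Real.log n / N + (N:ℝ) / m := by
      rw [add_div, mul_div_cancel_left₀ _ (ne_of_gt hmpos)]
    have hNm : (N:ℝ) / m < ε / 2 := by
      rw [div_lt_iff₀ hmpos]
      have := (div_lt_iff₀ hε).1 hmge
      linarith
    calc (wordLength S (rot α ^ m) : ℝ) / m
        ≤ ((m:ℝ) * (Csum * Real.log n / N) + N) / m := hdiv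
      _ = Csum * Real.log n / N + (N:ℝ) / m := heq
      _ < ε/2 + ε/2 := add_lt_add hAN hNm
      _ = ε := by ring
  rw [Real.dist_eq, sub_zero, abs_of_nonneg (by positivity)]
  exact hfinal
end
end

section
/- Let β ∈ (0, 10⁻³) and let f₁ be a homeomorphism of ℝ/ℤ such that f₁(x) = 0.4 + 2(x − 0.4) for all x with representative in [0.4, 0.6] and f₁(x) = x for all x in the image of [0.9, 1.1] in ℝ/ℤ. Then H₁ := T_{2β}⁻¹ ∘ f₁ ∘ T_{2β} ∘ f₁⁻¹ satisfies H₁(x) = x + 2β for all x with representative in [0.41, 0.79], and H₁(x) = x for all x in the image of [0.91, 1.09] in ℝ/ℤ. -/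
open Filter Set

noncomputable section

/-- Step 1 of Lemma 2: properties of `H₁ = T_{2β}⁻¹ ∘ f₁ ∘ T_{2β} ∘ f₁⁻¹`. -/
theorem statement8 (β : ℝ) (hβ : β ∈ Ioo (0 : ℝ) (1 / 1000))
    (f₁ : Circle1 ≃ₜ Circle1)
    (hf₁ : ∀ x : ℝ, x ∈ Icc (0.4 : ℝ) 0.6 →
      f₁ (x : Circle1) = ((0.4 + 2 * (x - 0.4) : ℝ) : Circle1))
    (hf₁' : ∀ x : ℝ, x ∈ Icc (0.9 : ℝ) 1.1 → f₁ (x : Circle1) = (x : Circle1)) :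
    (∀ x : ℝ, x ∈ Icc (0.41 : ℝ) 0.79 →
      (rot (2 * β)).symm (f₁ (rot (2 * β) (f₁.symm (x : Circle1))))
        = ((x + 2 * β : ℝ) : Circle1)) ∧
    (∀ x : ℝ, x ∈ Icc (0.91 : ℝ) 1.09 →
      (rot (2 * β)).symm (f₁ (rot (2 * β) (f₁.symm (x : Circle1)))) = (x : Circle1)) := by
  obtain ⟨hβ0, hβ1⟩ := hβ
  have hrot : ∀ (α : ℝ) (y : ℝ), rot α ((y : ℝ) : Circle1) = ((α + y : ℝ) : Circle1) := by
    intro α y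
    simp [rot]
  have hrots : ∀ (α : ℝ) (z : Circle1), (rot α).symm z = ((-α : ℝ) : Circle1) + z := by
    intro α z
    simp [rot, Homeomorph.addLeft]
  constructor
  · intro x hx
    obtain ⟨hx1, hx2⟩ := hx
    have hy : f₁.symm ((x : ℝ) : Circle1) = (((0.4 + (x - 0.4) / 2 : ℝ)) : Circle1) := by
      have h : f₁ (((0.4 + (x - 0.4) / 2 : ℝ)) : Circle1) = ((x : ℝ) : Circle1) := by
        rw [hf₁ _ (by constructor <;> nlinarith)]
        congr 1
        ring
      rw [← h, Homeomorph.symm_apply_apply]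
    rw [hy, hrot, hf₁ _ (by constructor <;> nlinarith), hrots]
    rw [← AddCircle.coe_add]
    congr 1
    ring
  · intro x hx
    obtain ⟨hx1, hx2⟩ := hx
    have hy : f₁.symm ((x : ℝ) : Circle1) = ((x : ℝ) : Circle1) := by
      conv_lhs => rw [← hf₁' _ ⟨by linarith, by linarith⟩]
      rw [Homeomorph.symm_apply_apply]
    rw [hy, hrot, hf₁' _ (by constructor <;> nlinarith), hrots]
    rw [← AddCircle.coe_add]
    congr 1
    ring
end
end

section
/- Let β ∈ (0, 10⁻³) and let H₁ be a homeomorphism of ℝ/ℤ such that H₁(x) = x + 2β for all x with representative in [0.41, 0.79] and H₁(x) = x for all x in the image of [0.91, 1.09] in ℝ/ℤ. Then H₂ := T_{1/2} ∘ H₁⁻¹ ∘ T_{1/2} ∘ H₁ satisfies H₂(x) = x − 2β for all x in the image of [0.95, 1] in ℝ/ℤ. -/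
open Filter Set

noncomputable section

/-- Step 2 of Lemma 2: `H₂ = T_{1/2} ∘ H₁⁻¹ ∘ T_{1/2} ∘ H₁` moves `[0.95,1]` by `-2β`. -/
theorem statement9 (β : ℝ) (hβ : β ∈ Ioo (0 : ℝ) (1 / 1000))
    (H₁ : Circle1 ≃ₜ Circle1)
    (hH₁ : ∀ x : ℝ, x ∈ Icc (0.41 : ℝ) 0.79 →
      H₁ (x : Circle1) = ((x + 2 * β : ℝ) : Circle1))
    (hH₁' : ∀ x : ℝ, x ∈ Icc (0.91 : ℝ) 1.09 → H₁ (x : Circle1) = (x : Circle1)) :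
    ∀ x : ℝ, x ∈ Icc (0.95 : ℝ) 1 →
      rot (1 / 2) (H₁.symm (rot (1 / 2) (H₁ (x : Circle1))))
        = ((x - 2 * β : ℝ) : Circle1) := by
  intro x hx
  obtain ⟨hx1, hx2⟩ := hx
  obtain ⟨hb1, hb2⟩ := hβ
  have wrap : ∀ a b : ℝ, a = b + 1 → ((a : ℝ) : Circle1) = ((b : ℝ) : Circle1) := by
    intro a b hab
    rw [hab]
    exact AddCircle.coe_add_period 1 b
  have key : ∀ r : ℝ, rot (1/2) ((r : ℝ) : Circle1) = ((r + 1/2 : ℝ) : Circle1) := by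
    intro r
    show ((1/2 : ℝ) : Circle1) + (r : Circle1) = _
    rw [← AddCircle.coe_add (p := 1), add_comm]
  rw [hH₁' x ⟨by linarith, by linarith⟩, key]
  have hy : H₁ (((x - 1/2 - 2*β : ℝ)) : Circle1) = ((x + 1/2 : ℝ) : Circle1) := by
    rw [hH₁ (x - 1/2 - 2*β) ⟨by linarith, by linarith⟩]
    exact (wrap (x + 1/2) (x - 1/2 - 2*β + 2*β) (by ring)).symm
  have hsymm : H₁.symm (((x + 1/2 : ℝ)) : Circle1) = ((x - 1/2 - 2*β : ℝ) : Circle1) := by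
    rw [← hy, Homeomorph.symm_apply_apply]
  rw [hsymm, key]
  exact congrArg _ (by ring)
end
end

section
/- Let H be an orientation-preserving homeomorphism of ℝ/ℤ with H(x) = x for all x in the image of [0.95, 1] in ℝ/ℤ, and let f₂ be an orientation-preserving homeomorphism of ℝ/ℤ with f₂(x) = 2x for all x with representative in [0, 0.49]. Then H₄ := f₂⁻¹ ∘ H ∘ f₂ satisfies: H₄(x) = H(2x)/2 for all x with representative in [0, 1/2), where H(2x)/2 is computed by taking the representative of H(2x) in [0, 1) and dividing by 2; and H₄(x) = x for all x with representative in [1/2, 1). -/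
open Filter Set

noncomputable section

/-- A circle homeomorphism is orientation-preserving if it admits a strictly increasing
lift `F : ℝ → ℝ` with `F (x+1) = F x + 1`. -/
def OrientationPreserving (f : Circle1 ≃ₜ Circle1) : Prop :=
  ∃ F : ℝ → ℝ, StrictMono F ∧ (∀ x, F (x + 1) = F x + 1) ∧
    ∀ x : ℝ, f (x : Circle1) = ((F x : ℝ) : Circle1)

lemma circ_sub_int (a b : ℝ) (h : (a : Circle1) = b) : ∃ k : ℤ, a - b = k := by
  rw [QuotientAddGroup.eq_iff_sub_mem, AddSubgroup.mem_zmultiples_iff] at h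
  obtain ⟨k, hk⟩ := h
  exact ⟨k, by simpa using hk.symm⟩

lemma circ_coe_sub_int (k : ℤ) (a : ℝ) : ((a - k : ℝ) : Circle1) = (a : Circle1) := by
  rw [QuotientAddGroup.eq_iff_sub_mem, AddSubgroup.mem_zmultiples_iff]
  exact ⟨-k, by simp⟩

lemma rep_coe (a : ℝ) (ha : a ∈ Ico (0:ℝ) 1) : rep ((a : ℝ) : Circle1) = a := by
  unfold rep
  rw [AddCircle.coe_equivIco_mk_apply, div_one, Int.fract_eq_self.2 ⟨ha.1, ha.2⟩, mul_one]

/-- Step 4 of Lemma 2: the conjugate `H₄ = f₂⁻¹ ∘ H ∘ f₂` is `x ↦ H(2x)/2` on `[0,1/2)`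
and the identity on `[1/2,1)`. -/
theorem statement12 (H f₂ : Circle1 ≃ₜ Circle1)
    (hH : OrientationPreserving H)
    (hHfix : ∀ x : ℝ, x ∈ Icc (0.95 : ℝ) 1 → H (x : Circle1) = (x : Circle1))
    (hf₂ : OrientationPreserving f₂)
    (hf₂eq : ∀ x : ℝ, x ∈ Icc (0 : ℝ) 0.49 →
      f₂ (x : Circle1) = ((2 * x : ℝ) : Circle1)) :
    (∀ x : ℝ, x ∈ Ico (0 : ℝ) (1 / 2) →
      f₂.symm (H (f₂ (x : Circle1)))
        = ((rep (H ((2 * x : ℝ) : Circle1)) / 2 : ℝ) : Circle1)) ∧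
    (∀ x : ℝ, x ∈ Ico (1 / 2 : ℝ) 1 →
      f₂.symm (H (f₂ (x : Circle1))) = (x : Circle1)) := by
  obtain ⟨F, hFm, hFp, hFl⟩ := hf₂
  obtain ⟨K, hKm, hKp, hKl⟩ := hH
  -- normalize the lift of f₂
  have h0 : ((F 0 : ℝ) : Circle1) = ((0:ℝ) : Circle1) := by
    rw [← hFl 0]
    simpa using hf₂eq 0 ⟨le_refl _, by norm_num⟩
  obtain ⟨k, hk⟩ := circ_sub_int _ _ h0
  have hF1 : F 1 = F 0 + 1 := by simpa using hFp 0
  set G : ℝ → ℝ := fun x => F x - k with hGdef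
  have hGm : StrictMono G := fun a b hab => by
    simp only [hGdef]; have := hFm hab; linarith
  have hGl : ∀ x : ℝ, f₂ (x : Circle1) = ((G x : ℝ) : Circle1) := by
    intro x; rw [hFl x, hGdef]; exact (circ_coe_sub_int k (F x)).symm
  have hGfix : ∀ x ∈ Icc (0:ℝ) 0.49, G x = 2 * x := by
    intro x hx
    have h1 : ((F x : ℝ) : Circle1) = ((2 * x : ℝ) : Circle1) := by
      rw [← hFl, hf₂eq x hx]
    obtain ⟨m, hm⟩ := circ_sub_int _ _ h1
    have l1 : F 0 ≤ F x := hFm.monotone hx.1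
    have l2 : F x < F 1 := hFm (by linarith [hx.2])
    have hmk : m = k := by
      have hb : (-1 : ℝ) < (m : ℝ) - k ∧ ((m : ℝ) - k) < 1 :=
        ⟨by nlinarith [hx.1, hx.2], by nlinarith [hx.1, hx.2]⟩
      have : (-1 : ℤ) < m - k ∧ m - k < 1 := by exact_mod_cast hb
      omega
    simp only [hGdef]
    rw [hmk] at hm; linarith
  have hG0 : G 0 = 0 := by simpa using hGfix 0 ⟨le_refl _, by norm_num⟩
  have hG1 : G 1 = 1 := by
    simp only [hGdef]; rw [hF1]; linarith [hk]
  have hG049 : G 0.49 = 0.98 := by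
    rw [hGfix 0.49 ⟨by norm_num, le_refl _⟩]; norm_num
  -- normalize the lift of H
  have hH1 : ((K 1 : ℝ) : Circle1) = ((1:ℝ) : Circle1) := by
    rw [← hKl 1]; exact hHfix 1 ⟨by norm_num, le_refl _⟩
  obtain ⟨j, hj⟩ := circ_sub_int _ _ hH1
  have hK1 : K 1 = K 0 + 1 := by simpa using hKp 0
  set L : ℝ → ℝ := fun x => K x - j with hLdef
  have hLm : StrictMono L := fun a b hab => by
    simp only [hLdef]; have := hKm hab; linarith
  have hLl : ∀ x : ℝ, H (x : Circle1) = ((L x : ℝ) : Circle1) := by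
    intro x; rw [hKl x, hLdef]; exact (circ_coe_sub_int j (K x)).symm
  have hLfix : ∀ x ∈ Icc (0.95:ℝ) 1, L x = x := by
    intro x hx
    have h1 : ((K x : ℝ) : Circle1) = ((x : ℝ) : Circle1) := by
      rw [← hKl, hHfix x hx]
    obtain ⟨m, hm⟩ := circ_sub_int _ _ h1
    have l1 : K x ≤ K 1 := hKm.monotone hx.2
    have l2 : K 0 < K 0.95 := hKm (by norm_num)
    have l3 : K 0.95 ≤ K x := hKm.monotone hx.1
    have hmj : m = j := by
      have hb : (-1 : ℝ) < (m : ℝ) - j ∧ ((m : ℝ) - j) < 1 :=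
        ⟨by nlinarith [hx.1, hx.2], by nlinarith [hx.1, hx.2]⟩
      have : (-1 : ℤ) < m - j ∧ m - j < 1 := by exact_mod_cast hb
      omega
    simp only [hLdef]
    rw [hmj] at hm; linarith
  have hL1 : L 1 = 1 := hLfix 1 ⟨by norm_num, le_refl _⟩
  have hL0 : L 0 = 0 := by
    have := hKp 0
    simp only [hLdef] at hL1 ⊢
    rw [hK1] at hL1; linarith
  have hL095 : L 0.95 = 0.95 := hLfix 0.95 ⟨le_refl _, by norm_num⟩
  have hLrange : ∀ t ∈ Icc (0:ℝ) 0.98, L t ∈ Icc (0:ℝ) 0.98 := by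
    intro t ht
    constructor
    · have := hLm.monotone ht.1; rw [hL0] at this; exact this
    · by_cases hc : t ≤ 0.95
      · have := hLm.monotone hc; rw [hL095] at this; linarith
      · push_neg at hc
        rw [hLfix t ⟨le_of_lt hc, by linarith [ht.2]⟩]; exact ht.2
  constructor
  · intro x hx
    by_cases hc : x ≤ 0.49
    · have hx2 : (2 * x) ∈ Icc (0:ℝ) 0.98 := ⟨by linarith [hx.1], by linarith⟩
      obtain ⟨y, hy, hHy⟩ : ∃ y : ℝ, y ∈ Icc (0:ℝ) 0.98 ∧
          H ((2 * x : ℝ) : Circle1) = ((y : ℝ) : Circle1) :=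
        ⟨L (2 * x), hLrange _ hx2, hLl (2 * x)⟩
      have hylt : y < 1 := lt_of_le_of_lt hy.2 (by norm_num)
      have hrep : rep (H ((2 * x : ℝ) : Circle1)) = y := by
        rw [hHy]; exact rep_coe y ⟨hy.1, hylt⟩
      rw [hf₂eq x ⟨hx.1, hc⟩, hrep, hHy]
      have h2 : f₂ ((y / 2 : ℝ) : Circle1) = ((y : ℝ) : Circle1) := by
        rw [hf₂eq (y / 2) ⟨by linarith [hy.1], by linarith [hy.2]⟩]
        exact congrArg _ (by ring)
      rw [← h2, Homeomorph.symm_apply_apply]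
    · push_neg at hc
      have hGx : G x ∈ Icc (0.95:ℝ) 1 := by
        constructor
        · have := hGm hc; rw [hG049] at this; linarith
        · have := hGm (show x < 1 by linarith [hx.2]); rw [hG1] at this; linarith
      have h2x : (2 * x) ∈ Icc (0.95:ℝ) 1 := ⟨by linarith, by linarith [hx.2]⟩
      have hrep : rep (H ((2 * x : ℝ) : Circle1)) = 2 * x := by
        rw [hHfix _ h2x]; exact rep_coe _ ⟨by linarith, by linarith [hx.2]⟩
      rw [hrep, hGl x, hHfix _ hGx, ← hGl x, Homeomorph.symm_apply_apply]
      exact congrArg _ (by ring)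
  · intro x hx
    have hGx : G x ∈ Icc (0.95:ℝ) 1 := by
      constructor
      · have := hGm (show (0.49:ℝ) < x by linarith [hx.1])
        rw [hG049] at this; linarith
      · have := hGm hx.2; rw [hG1] at this; linarith
    rw [hGl x, hHfix _ hGx, ← hGl x, Homeomorph.symm_apply_apply]
end
end

section
/- Let H be a homeomorphism of ℝ/ℤ fixing 0, and let H₄ be a homeomorphism of ℝ/ℤ such that H₄(x) = H(2x)/2 for all x with representative in [0, 1/2) (with H(2x)/2 computed by taking the representative of H(2x) in [0,1) and dividing by 2) and H₄(x) = x for all x with representative in [1/2, 1). Then H₅ := T_{1/2} ∘ H₄ ∘ T_{1/2} ∘ H₄ satisfies H₅(x) = H(2x)/2 for all x with representative in [0, 1/2), and H₅(x) = H(2x−1)/2 + 1/2 for all x with representative in [1/2, 1), with the same representative conventions. -/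
open Filter Set

noncomputable section

/-- Step 5 of Lemma 2: the graph of `H₅ = T_{1/2} ∘ H₄ ∘ T_{1/2} ∘ H₄` is built from
two scaled copies of the graph of `H`. -/
theorem statement13 (H H₄ : Circle1 ≃ₜ Circle1)
    (h1 : ∀ x : ℝ, x ∈ Ico (0 : ℝ) (1 / 2) →
      H₄ (x : Circle1) = ((rep (H ((2 * x : ℝ) : Circle1)) / 2 : ℝ) : Circle1))
    (h2 : ∀ x : ℝ, x ∈ Ico (1 / 2 : ℝ) 1 → H₄ (x : Circle1) = (x : Circle1)) :
    (∀ x : ℝ, x ∈ Ico (0 : ℝ) (1 / 2) →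
      rot (1 / 2) (H₄ (rot (1 / 2) (H₄ (x : Circle1))))
        = ((rep (H ((2 * x : ℝ) : Circle1)) / 2 : ℝ) : Circle1)) ∧
    (∀ x : ℝ, x ∈ Ico (1 / 2 : ℝ) 1 →
      rot (1 / 2) (H₄ (rot (1 / 2) (H₄ (x : Circle1))))
        = ((rep (H ((2 * x - 1 : ℝ) : Circle1)) / 2 + 1 / 2 : ℝ) : Circle1)) := by
  have hrep : ∀ z : Circle1, rep z ∈ Ico (0:ℝ) 1 := by
    intro z
    have := (AddCircle.equivIco 1 0 z).2
    simpa [rep] using this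
  have hrot : ∀ y : Circle1, rot (1/2) y = ((1/2 : ℝ) : Circle1) + y := fun y => rfl
  have hadd : ∀ a b : ℝ, ((a : Circle1) + (b : Circle1)) = ((a + b : ℝ) : Circle1) := by
    intro a b; norm_cast
  constructor
  · intro x hx
    set r := rep (H ((2 * x : ℝ) : Circle1)) with hr
    have hr01 : r ∈ Ico (0:ℝ) 1 := hrep _
    simp only [h1 x hx, hrot, hadd]
    have hmem : 1/2 + r/2 ∈ Ico (1/2 : ℝ) 1 := by
      constructor <;> [linarith [hr01.1]; linarith [hr01.2]]
    rw [h2 _ hmem]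
    simp only [hrot, hadd]
    have : (1/2 + (1/2 + r/2) : ℝ) = r/2 + 1 := by ring
    rw [this, AddCircle.coe_add_period]
  · intro x hx
    simp only [h2 x hx, hrot, hadd]
    have hco : ((1/2 + x : ℝ) : Circle1) = ((x - 1/2 : ℝ) : Circle1) := by
      rw [show (1/2 + x : ℝ) = (x - 1/2) + 1 by ring, AddCircle.coe_add_period]
    have hmem : x - 1/2 ∈ Ico (0:ℝ) (1/2) := by
      constructor <;> [linarith [hx.1]; linarith [hx.2]]
    rw [hco, h1 _ hmem]
    simp only [hrot, hadd]
    have h2x : (2 * (x - 1/2) : ℝ) = 2 * x - 1 := by ring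
    rw [h2x]
    congr 1
    ring
end
end

section
/- Let β ∈ (0, 10⁻³), let H be a homeomorphism of ℝ/ℤ satisfying T_{2β+1/2} ∘ H ∘ T_{−2β−1/2} ∘ H = T_{4β}, and let K be a homeomorphism of ℝ/ℤ such that K(x) = H(2x)/2 for all x with representative in [0, 1/2) and K(x) = H(2x−1)/2 + 1/2 for all x with representative in [1/2, 1), where H(2x)/2 and H(2x−1)/2 are computed by taking the representative in [0,1) of the value of H and dividing by 2. Then T_{β+1/4} ∘ K ∘ T_{−β−1/4} ∘ K = T_{2β}. -/
open Filter Set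

noncomputable section

namespace Stmt14Aux

lemma int_coe_zero (n : ℤ) : (((n : ℝ)) : Circle1) = 0 :=
  (AddCircle.coe_eq_zero_iff (1:ℝ)).mpr ⟨n, by simp⟩

lemma rep_coe (x : ℝ) : rep (x : Circle1) = Int.fract x := by
  simp [rep, AddCircle.coe_equivIco_mk_apply (𝕜 := ℝ) (p := 1) x]

lemma coe_rep (z : Circle1) : ((rep z : ℝ) : Circle1) = z := by
  induction z using QuotientAddGroup.induction_on with
  | H x =>
    rw [rep_coe, Int.fract, AddCircle.coe_sub, int_coe_zero, sub_zero]

lemma rep_mem (z : Circle1) : rep z ∈ Ico (0:ℝ) 1 := by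
  have := (AddCircle.equivIco 1 0 z).2
  simpa [rep] using this

lemma rep_coe_of_mem {x : ℝ} (h : x ∈ Ico (0:ℝ) 1) : rep (x : Circle1) = x := by
  rw [rep_coe, Int.fract_eq_self.mpr ⟨h.1, h.2⟩]

lemma exists_rep (z : Circle1) : ∃ x ∈ Ico (0:ℝ) 1, (x : Circle1) = z :=
  ⟨rep z, rep_mem z, coe_rep z⟩

lemma half_ne_zero : ((1/2 : ℝ) : Circle1) ≠ 0 := by
  intro h
  rw [AddCircle.coe_eq_zero_iff] at h
  obtain ⟨n, hn⟩ := h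
  simp only [zsmul_eq_mul, mul_one] at hn
  have h2 : ((2 * n : ℤ) : ℝ) = 1 := by push_cast; linarith
  have : (2 * n : ℤ) = 1 := by exact_mod_cast h2
  omega

lemma ker_double {z : Circle1} (hz : z + z = 0) : z = 0 ∨ z = ((1/2:ℝ) : Circle1) := by
  obtain ⟨x, hx, rfl⟩ := exists_rep z
  rw [← AddCircle.coe_add, AddCircle.coe_eq_zero_iff] at hz
  obtain ⟨n, hn⟩ := hz
  simp only [zsmul_eq_mul, mul_one] at hn
  have h0 : (0:ℝ) ≤ (n:ℝ) := by rw [hn]; linarith [hx.1]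
  have h2 : ((n:ℝ)) < 2 := by rw [hn]; linarith [hx.2]
  have hn0 : (0:ℤ) ≤ n := by exact_mod_cast h0
  have hn2 : n < 2 := by exact_mod_cast h2
  interval_cases n
  · left
    have : x = 0 := by simp at hn; linarith
    rw [this]; norm_cast
  · right
    have : x = 1/2 := by simp at hn; linarith
    rw [this]

end Stmt14Aux

open Stmt14Aux in
/-- Step 6 of Lemma 2: rescaling the relation `T_{2β+1/2} ∘ H ∘ T_{-2β-1/2} ∘ H = T_{4β}`
by one half yields `T_{β+1/4} ∘ K ∘ T_{-β-1/4} ∘ K = T_{2β}`, where the graph of `K`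
consists of two half-scaled copies of the graph of `H`. -/
theorem statement14 (β : ℝ) (hβ : β ∈ Ioo (0 : ℝ) (1 / 1000))
    (H K : Circle1 ≃ₜ Circle1)
    (hH : ∀ y : Circle1,
      rot (2 * β + 1 / 2) (H (rot (-(2 * β) - 1 / 2) (H y))) = rot (4 * β) y)
    (hK1 : ∀ x : ℝ, x ∈ Ico (0 : ℝ) (1 / 2) →
      K (x : Circle1) = ((rep (H ((2 * x : ℝ) : Circle1)) / 2 : ℝ) : Circle1))
    (hK2 : ∀ x : ℝ, x ∈ Ico (1 / 2 : ℝ) 1 →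
      K (x : Circle1) = ((rep (H ((2 * x - 1 : ℝ) : Circle1)) / 2 + 1 / 2 : ℝ) : Circle1)) :
    ∀ y : Circle1, rot (β + 1 / 4) (K (rot (-β - 1 / 4) (K y))) = rot (2 * β) y := by
  obtain ⟨hβ0, hβ1⟩ := hβ
  have hrot : ∀ (α : ℝ) (z : Circle1), rot α z = ((α : ℝ) : Circle1) + z := fun _ _ => rfl
  -- doubling semiconjugacy
  have hD : ∀ z : Circle1, K z + K z = H (z + z) := by
    intro z
    obtain ⟨x, hx, rfl⟩ := exists_rep z
    have hxx : (x : Circle1) + (x : Circle1) = ((2 * x : ℝ) : Circle1) := by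
      rw [← AddCircle.coe_add]; congr 1; ring
    rcases lt_or_ge x (1/2) with h | h
    · rw [hK1 x ⟨hx.1, h⟩, hxx, ← AddCircle.coe_add]
      have e : rep (H ((2*x:ℝ):Circle1)) / 2 + rep (H ((2*x:ℝ):Circle1)) / 2
          = rep (H ((2*x:ℝ):Circle1)) := by ring
      rw [e, coe_rep]
    · rw [hK2 x ⟨h, hx.2⟩, hxx, ← AddCircle.coe_add]
      have e : rep (H ((2*x-1:ℝ):Circle1)) / 2 + 1/2 + (rep (H ((2*x-1:ℝ):Circle1)) / 2 + 1/2)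
          = rep (H ((2*x-1:ℝ):Circle1)) + 1 := by ring
      rw [e, AddCircle.coe_add_period, coe_rep]
      congr 1
      conv_rhs => rw [show (2*x:ℝ) = (2*x-1) + 1 by ring]
      rw [AddCircle.coe_add_period]
  have hH' : ∀ y : Circle1, ((2*β + 1/2 : ℝ) : Circle1)
      + H (((-(2*β) - 1/2 : ℝ) : Circle1) + H y) = ((4*β : ℝ) : Circle1) + y := hH
  set g : Circle1 → Circle1 := fun y => rot (β + 1/4) (K (rot (-β - 1/4) (K y))) with hg
  have hgy : ∀ y, g y = ((β + 1/4 : ℝ) : Circle1)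
      + K (((-β - 1/4 : ℝ) : Circle1) + K y) := fun _ => rfl
  -- doubled relation
  have hDg : ∀ y : Circle1, g y + g y = rot (2*β) y + rot (2*β) y := by
    intro y
    rw [hgy, hrot]
    set c := ((β + 1/4 : ℝ) : Circle1)
    set w := ((-β - 1/4 : ℝ) : Circle1) + K y with hw
    have e2 : w + w = ((-(2*β) - 1/2 : ℝ) : Circle1) + H (y + y) := by
      have e : w + w = (((-β - 1/4:ℝ) : Circle1) + ((-β - 1/4:ℝ) : Circle1)) + (K y + K y) := by
        rw [hw]; abel
      rw [e, hD y, ← AddCircle.coe_add]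
      congr 2
      ring
    calc (c + K w) + (c + K w) = (c + c) + (K w + K w) := by abel
      _ = ((2*β + 1/2 : ℝ) : Circle1) + H (w + w) := by
          rw [hD w]; congr 1; rw [← AddCircle.coe_add]; congr 1; ring
      _ = ((2*β + 1/2 : ℝ) : Circle1) + H (((-(2*β) - 1/2 : ℝ) : Circle1) + H (y + y)) := by
          rw [e2]
      _ = ((4*β : ℝ) : Circle1) + (y + y) := hH' (y + y)
      _ = (((2*β : ℝ) : Circle1) + y) + (((2*β : ℝ) : Circle1) + y) := by
          rw [show ((4*β:ℝ) : Circle1) = ((2*β:ℝ) : Circle1) + ((2*β:ℝ) : Circle1) by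
            rw [← AddCircle.coe_add]; congr 1; ring]
          abel
  -- dichotomy
  have hdi : ∀ y, g y = rot (2*β) y ∨ g y = rot (2*β) y + ((1/2:ℝ) : Circle1) := by
    intro y
    have h0 : (g y - rot (2*β) y) + (g y - rot (2*β) y) = 0 := by
      rw [sub_add_sub_comm, hDg y, sub_self]
    rcases ker_double h0 with h | h
    · left; exact sub_eq_zero.mp h
    · right; rw [← h]; abel
  have hgcont : Continuous g := (rot (β + 1/4)).continuous.comp
    (K.continuous.comp ((rot (-β - 1/4)).continuous.comp K.continuous))
  set U : Set Circle1 := {y | g y = rot (2*β) y} with hU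
  have hUc : IsClosed U := isClosed_eq hgcont (rot (2*β)).continuous
  have hUcc : IsClosed Uᶜ := by
    have e : Uᶜ = {y | g y = rot (2*β) y + ((1/2:ℝ) : Circle1)} := by
      ext y
      simp only [hU, mem_compl_iff, mem_setOf_eq]
      constructor
      · intro h; exact (hdi y).resolve_left h
      · intro h hmem
        rw [hmem] at h
        exact half_ne_zero (left_eq_add.mp h)
    rw [e]
    exact isClosed_eq hgcont (((rot (2*β)).continuous).add continuous_const)
  rcases isClopen_iff.mp ⟨hUc, isClosed_compl_iff.mp hUcc⟩ with hE | hUuniv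
  · -- bad case: U empty
    exfalso
    have hbad : ∀ y, g y = rot (2*β) y + ((1/2:ℝ) : Circle1) := by
      intro y
      refine (hdi y).resolve_left fun h => ?_
      have : y ∈ U := h
      rw [hE] at this
      exact this
    have hbad2 : ∀ y, K (((-β - 1/4:ℝ) : Circle1) + K y) = ((β + 1/4:ℝ) : Circle1) + y := by
      intro y
      have h := hbad y
      rw [hgy, hrot] at h
      have e2 : ((2*β:ℝ) : Circle1) + y + ((1/2:ℝ) : Circle1)
          = ((β + 1/4:ℝ) : Circle1) + (((β + 1/4:ℝ) : Circle1) + y) := by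
        have e3 : ((2*β:ℝ) : Circle1) + ((1/2:ℝ) : Circle1)
            = ((β + 1/4:ℝ) : Circle1) + ((β + 1/4:ℝ) : Circle1) := by
          rw [← AddCircle.coe_add, ← AddCircle.coe_add]; congr 1; ring
        calc ((2*β:ℝ) : Circle1) + y + ((1/2:ℝ) : Circle1)
            = (((2*β:ℝ) : Circle1) + ((1/2:ℝ) : Circle1)) + y := by abel
          _ = (((β + 1/4:ℝ) : Circle1) + ((β + 1/4:ℝ) : Circle1)) + y := by rw [e3]
          _ = ((β + 1/4:ℝ) : Circle1) + (((β + 1/4:ℝ) : Circle1) + y) := by abel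
      rw [e2] at h
      exact add_left_cancel h
    have hhalf1 : ∀ z : Circle1, rep z < 1/2 → rep (K z) < 1/2 := by
      intro z hz
      have h1 := hK1 (rep z) ⟨(rep_mem z).1, hz⟩
      rw [coe_rep] at h1
      have hr := rep_mem (H ((2 * rep z : ℝ) : Circle1))
      rw [h1, rep_coe_of_mem ⟨by linarith [hr.1], by linarith [hr.2]⟩]
      linarith [hr.2]
    have hhalf2 : ∀ z : Circle1, 1/2 ≤ rep z → 1/2 ≤ rep (K z) := by
      intro z hz
      have h1 := hK2 (rep z) ⟨hz, (rep_mem z).2⟩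
      rw [coe_rep] at h1
      have hr := rep_mem (H ((2 * rep z - 1 : ℝ) : Circle1))
      rw [h1, rep_coe_of_mem ⟨by linarith [hr.1], by linarith [hr.2]⟩]
      linarith [hr.1]
    have hC2 : ∀ y : Circle1, 3/4 - β ≤ rep y →
        1/2 ≤ rep (K y) ∧ rep (K y) < 3/4 + β := by
      intro y hy
      have hy1 := (rep_mem y).2
      have hu : 1/2 ≤ rep (K y) := hhalf2 y (by linarith)
      refine ⟨hu, ?_⟩
      have hu1 := (rep_mem (K y)).2
      have h1 := hbad2 y
      have e : ((-β - 1/4:ℝ) : Circle1) + K y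
          = ((rep (K y) + (-β - 1/4) : ℝ) : Circle1) := by
        conv_lhs => rw [← coe_rep (K y)]
        rw [← AddCircle.coe_add]; congr 1; ring
      rw [e] at h1
      have eR : ((β + 1/4:ℝ) : Circle1) + y
          = ((rep y + (β + 1/4) - 1 : ℝ) : Circle1) := by
        conv_lhs => rw [← coe_rep y]
        rw [← AddCircle.coe_add]
        conv_lhs => rw [show (β + 1/4) + rep y = (rep y + (β + 1/4) - 1) + 1 by ring]
        rw [AddCircle.coe_add_period]
      have hRrep : rep (((β + 1/4:ℝ) : Circle1) + y) = rep y + (β + 1/4) - 1 := by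
        rw [eR]; exact rep_coe_of_mem ⟨by linarith, by linarith⟩
      by_contra hcon
      push_neg at hcon
      have hargrep : rep (((rep (K y) + (-β - 1/4) : ℝ) : Circle1))
          = rep (K y) + (-β - 1/4) :=
        rep_coe_of_mem ⟨by linarith, by linarith⟩
      have h2 := hhalf2 _ (by rw [hargrep]; linarith)
      rw [h1, hRrep] at h2
      linarith
    have hrep0 : rep (0 : Circle1) = 0 := by
      rw [show (0 : Circle1) = ((0:ℝ) : Circle1) from rfl]
      exact rep_coe_of_mem ⟨le_refl _, by norm_num⟩
    have hK0 : rep (K 0) < 1/2 := hhalf1 0 (by rw [hrep0]; norm_num)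
    -- the sequence approaching 0 from below
    have h8 : ∀ n : ℕ, (0:ℝ) < (n:ℝ) + 8 := fun n => by positivity
    have hfrac : ∀ n : ℕ, 1/((n:ℝ)+8) ≤ 1/8 := fun n =>
      one_div_le_one_div_of_le (by norm_num) (le_add_of_nonneg_left (Nat.cast_nonneg n))
    have hfracpos : ∀ n : ℕ, 0 < 1/((n:ℝ)+8) := fun n => by positivity
    have hrepn : ∀ n : ℕ, rep (((1 - 1/((n:ℝ)+8) : ℝ) : Circle1)) = 1 - 1/((n:ℝ)+8) :=
      fun n => rep_coe_of_mem ⟨by linarith [hfrac n], by linarith [hfracpos n]⟩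
    set S : Set Circle1 := (fun t : ℝ => (t : Circle1)) '' Icc (1/2) (3/4+β) with hSdef
    have hcoe : Continuous ((↑) : ℝ → Circle1) := continuous_quotient_mk'
    have hScl : IsClosed S := (isCompact_Icc.image hcoe).isClosed
    have hSmem : ∀ n : ℕ, K (((1 - 1/((n:ℝ)+8) : ℝ) : Circle1)) ∈ S := by
      intro n
      have h := hC2 _ (by rw [hrepn n]; linarith [hfrac n])
      exact ⟨rep (K (((1 - 1/((n:ℝ)+8) : ℝ) : Circle1))), ⟨h.1, le_of_lt h.2⟩, coe_rep _⟩
    have hrlim : Tendsto (fun n : ℕ => (1 - 1/((n:ℝ)+8) : ℝ)) atTop (nhds 1) := by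
      have h1 : Tendsto (fun n : ℕ => ((n:ℝ)+8)) atTop atTop :=
        tendsto_atTop_add_const_right _ _ tendsto_natCast_atTop_atTop
      have h2 := h1.inv_tendsto_atTop
      have h3 := tendsto_const_nhds (x := (1:ℝ)) (f := atTop (α := ℕ)) |>.sub h2
      simpa [one_div] using h3
    have hlim : Tendsto (fun n : ℕ => K (((1 - 1/((n:ℝ)+8) : ℝ) : Circle1))) atTop
        (nhds (K 0)) := by
      have h4 : Tendsto (fun n : ℕ => (((1 - 1/((n:ℝ)+8) : ℝ)) : Circle1)) atTop
          (nhds (0 : Circle1)) := by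
        have h := (hcoe.tendsto 1).comp hrlim
        rw [AddCircle.coe_period] at h
        exact h
      exact (K.continuous.tendsto 0).comp h4
    have hK0mem : K 0 ∈ S := hScl.mem_of_tendsto hlim (Eventually.of_forall hSmem)
    obtain ⟨t, ht, hteq⟩ := hK0mem
    have htrep : rep (K 0) = t := by
      rw [← hteq]; exact rep_coe_of_mem ⟨by linarith [ht.1], by linarith [ht.2]⟩
    linarith [ht.1, htrep ▸ hK0]
  · intro y
    have : y ∈ U := by rw [hUuniv]; trivial
    exact this
end
end
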